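/- arXiv:2202.02955 — 10 statements merged into one kernel-verified Lean document; each statement's English description precedes it below -/
import Mathlib

section
/- Let f : (0,∞) → ℝ be continuous with f(s) > 0 for all s > 0, and suppose f has regular variation at 0 with index m₁ > 1 and regular variation at ∞ with index m₂ > 1. Then there exist q > 1 and c > 0 such that f(sλ) ≥ c s^q f(λ) for all s ≥ 1 and all λ > 0. In particular, f is superlinear: inf_{λ>0} f(λs)/(s f(λ)) → ∞ as s → ∞. -/
open Set Filter


lemma baire_step (f : ℝ → ℝ) (hf_cont : ContinuousOn f (Ioi 0))
    (S : ℕ → Set ℝ) (hSpos : ∀ n, S n ⊆ Ioi 0)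
    (hcov : ∀ t ∈ Icc (1:ℝ) 2, ∃ n : ℕ, 1 ≤ n ∧
      ∀ μ ∈ S n, f μ / n ≤ f (t * μ) ∧ f (t * μ) ≤ n * f μ) :
    ∃ a b : ℝ, 1 ≤ a ∧ a < b ∧ b ≤ 2 ∧ ∃ n : ℕ, 1 ≤ n ∧
      ∀ t ∈ Icc a b, ∀ μ ∈ S n, f μ / n ≤ f (t * μ) ∧ f (t * μ) ≤ n * f μ := by
  set X := Icc (1:ℝ) 2
  have hX : ∀ x : X, (0:ℝ) < (x:ℝ) := fun x => lt_of_lt_of_le one_pos x.2.1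
  set E : ℕ → Set X := fun n => {t : X | ∀ μ ∈ S (n+1), f μ / (n+1) ≤ f ((t:ℝ) * μ) ∧ f ((t:ℝ) * μ) ≤ (n+1) * f μ} with hE
  have hclosed : ∀ n, IsClosed (E n) := by
    intro n
    have : E n = ⋂ μ ∈ S (n+1), {t : X | f μ / (n+1) ≤ f ((t:ℝ) * μ) ∧ f ((t:ℝ) * μ) ≤ (n+1) * f μ} := by
      ext t; simp [hE]
    rw [this]
    refine isClosed_biInter (fun μ hμ => ?_)
    have hμ0 : (0:ℝ) < μ := hSpos _ hμ
    have hcont : Continuous (fun t : X => f ((t:ℝ) * μ)) := by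
      refine hf_cont.comp_continuous (by continuity) (fun x => ?_)
      exact mul_pos (hX x) hμ0
    exact (isClosed_le continuous_const hcont).inter (isClosed_le hcont continuous_const)
  have hcover : ⋃ n, E n = univ := by
    ext t
    simp only [mem_iUnion, mem_univ, iff_true]
    obtain ⟨n, hn1, hn⟩ := hcov (t:ℝ) t.2
    obtain ⟨m, rfl⟩ := Nat.exists_eq_add_of_le hn1
    exact ⟨m, by simpa [hE, add_comm] using hn⟩
  have hne : Nonempty X := ⟨⟨1, le_refl 1, one_le_two⟩⟩
  obtain ⟨n, t₀, ht₀⟩ := nonempty_interior_of_iUnion_of_closed hclosed hcover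
  rw [mem_interior_iff_mem_nhds, Metric.mem_nhds_iff] at ht₀
  obtain ⟨ε, hε, hball⟩ := ht₀
  refine ⟨max 1 ((t₀:ℝ) - ε/2), min 2 ((t₀:ℝ) + ε/2), le_max_left _ _, ?_, min_le_left _ _,
    n+1, Nat.one_le_iff_ne_zero.mpr (Nat.succ_ne_zero n), ?_⟩
  · rcases t₀ with ⟨t₀, ht₀1, ht₀2⟩
    have : (0:ℝ) < ε/2 := by linarith
    apply max_lt <;> apply lt_min <;> linarith
  · intro t ht μ hμ
    have ht1 : (1:ℝ) ≤ t := le_trans (le_max_left _ _) ht.1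
    have ht2 : t ≤ 2 := le_trans ht.2 (min_le_left _ _)
    have htd : (⟨t, ht1, ht2⟩ : X) ∈ Metric.ball t₀ ε := by
      rw [Metric.mem_ball, Subtype.dist_eq, Real.dist_eq]
      have h1 := le_trans ht.2 (min_le_right _ _)
      have h2 := le_trans (le_max_right _ _) ht.1
      rw [show ((⟨t, ht1, ht2⟩ : X) : ℝ) = t from rfl, abs_sub_lt_iff]
      constructor <;> linarith
    have := hball htd
    simpa using this μ hμ

lemma extend_step (f : ℝ → ℝ) (hf_pos : ∀ s : ℝ, 0 < s → 0 < f s)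
    (a b N : ℝ) (ha : 1 ≤ a) (hab : a < b) (hb : b ≤ 2) (hN : 1 ≤ N)
    (D₀ D : Set ℝ) (hDpos : D ⊆ Ioi 0)
    (hDD : ∀ μ ∈ D, ∀ u : ℝ, 1/4 ≤ u → u ≤ 4 → u * μ ∈ D₀)
    (hbd : ∀ t ∈ Icc a b, ∀ μ ∈ D₀, f μ / N ≤ f (t * μ) ∧ f (t * μ) ≤ N * f μ) :
    ∃ c : ℝ, 0 < c ∧ ∀ t ∈ Icc (1:ℝ) 2, ∀ μ ∈ D, c * f μ ≤ f (t * μ) := by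
  have ha0 : (0:ℝ) < a := lt_of_lt_of_le one_pos ha
  have hN0 : (0:ℝ) < N := lt_of_lt_of_le one_pos hN
  have hρ : 1 < b / a := (one_lt_div ha0).mpr hab
  have hρ2 : b / a ≤ 2 := by
    rw [div_le_iff₀ ha0]; nlinarith
  -- step 2
  have claim2 : ∀ t, 1 ≤ t → t ≤ b / a → ∀ μ ∈ D, ∀ v : ℝ, 1 ≤ v → v ≤ 2 →
      1 / N ^ 2 * f (v * μ) ≤ f (t * (v * μ)) := by
    intro t ht1 ht2 μ hμ v hv1 hv2
    have hμ₀ : (v / a) * μ ∈ D₀ := by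
      refine hDD μ hμ _ ?_ ?_
      · rw [le_div_iff₀ ha0]; nlinarith
      · rw [div_le_iff₀ ha0]; nlinarith
    have hta : t * a ≤ b := by rw [← le_div_iff₀ ha0]; exact ht2
    have h1 := hbd (t * a) ⟨by nlinarith, hta⟩ _ hμ₀
    have h2 := hbd a ⟨le_refl a, le_of_lt hab⟩ _ hμ₀
    have e1 : t * a * (v / a * μ) = t * (v * μ) := by field_simp
    have e2 : a * (v / a * μ) = v * μ := by field_simp
    rw [e1] at h1
    rw [e2] at h2
    calc 1 / N ^ 2 * f (v * μ) ≤ 1 / N ^ 2 * (N * f (v / a * μ)) := by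
          apply mul_le_mul_of_nonneg_left h2.2 (by positivity)
      _ = f (v / a * μ) / N := by field_simp
      _ ≤ f (t * (v * μ)) := h1.1
  have hN2 : (0:ℝ) < 1 / N ^ 2 := by positivity
  have hN2' : 1 / N ^ 2 ≤ 1 := by
    rw [div_le_one (by positivity)]; nlinarith
  have claim3 : ∀ j : ℕ, ∀ t : ℝ, 1 ≤ t → t ≤ 2 → t ≤ (b/a)^j → ∀ μ ∈ D,
      (1/N^2)^j * f μ ≤ f (t * μ) := by
    intro j
    induction j with
    | zero =>
      intro t ht1 ht2 htj μ hμ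
      have : t = 1 := le_antisymm (by simpa using htj) ht1
      simp [this]
    | succ j ih =>
      intro t ht1 ht2 htj μ hμ
      have hfμ : 0 ≤ f μ := le_of_lt (hf_pos μ (hDpos hμ))
      by_cases hcase : t ≤ (b/a)^j
      · calc (1/N^2)^(j+1) * f μ ≤ (1/N^2)^j * f μ := by
              apply mul_le_mul_of_nonneg_right _ hfμ
              exact pow_le_pow_of_le_one (le_of_lt hN2) hN2' (Nat.le_succ j)
          _ ≤ f (t * μ) := ih t ht1 ht2 hcase μ hμ
      · by_cases hcase2 : t ≤ b/a
        · have h := claim2 t ht1 hcase2 μ hμ 1 le_rfl one_le_two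
          simp only [one_mul] at h
          calc (1/N^2)^(j+1) * f μ ≤ (1/N^2)^1 * f μ := by
                apply mul_le_mul_of_nonneg_right _ hfμ
                exact pow_le_pow_of_le_one (le_of_lt hN2) hN2' (Nat.one_le_iff_ne_zero.mpr (Nat.succ_ne_zero j))
            _ = 1/N^2 * f μ := by ring
            _ ≤ f (t * μ) := h
        · push_neg at hcase2
          have hb0 : (0:ℝ) < b := lt_trans ha0 hab
          set t' := t * a / b with ht'
          have ht'1 : 1 ≤ t' := by rw [ht', le_div_iff₀ hb0]; rw [div_lt_iff₀ ha0] at hcase2; linarith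
          have ht'2 : t' ≤ 2 := by
            have : t' ≤ t := by rw [ht', div_le_iff₀ hb0]; nlinarith
            linarith
          have ht'j : t' ≤ (b/a)^j := by
            rw [pow_succ] at htj
            rw [ht', div_le_iff₀ hb0]
            calc t * a = t * a := rfl
              _ ≤ (b/a)^j * (b/a) * a := by nlinarith
              _ = (b/a)^j * b := by field_simp
          have h1 := ih t' ht'1 ht'2 ht'j μ hμ
          have h2 := claim2 (b/a) (le_of_lt hρ) le_rfl μ hμ t' ht'1 ht'2
          have e : b/a * (t' * μ) = t * μ := by rw [ht']; field_simp
          rw [e] at h2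
          calc (1/N^2)^(j+1) * f μ = 1/N^2 * ((1/N^2)^j * f μ) := by ring
            _ ≤ 1/N^2 * f (t' * μ) := mul_le_mul_of_nonneg_left h1 (le_of_lt hN2)
            _ ≤ f (t * μ) := h2
  obtain ⟨k, hk⟩ := pow_unbounded_of_one_lt (2:ℝ) hρ
  refine ⟨(1/N^2)^k, by positivity, fun t ht μ hμ => ?_⟩
  exact claim3 k t ht.1 ht.2 (le_trans ht.2 (le_of_lt hk)) μ hμ

lemma unif0 (f : ℝ → ℝ) (hf_cont : ContinuousOn f (Ioi 0)) (hf_pos : ∀ s : ℝ, 0 < s → 0 < f s)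
    (m₁ : ℝ)
    (hreg0 : ∀ s : ℝ, 0 < s →
      Tendsto (fun lam : ℝ => f (lam * s) / f lam) (nhdsWithin 0 (Ioi 0)) (nhds (s ^ m₁))) :
    ∃ c : ℝ, 0 < c ∧ ∃ ε : ℝ, 0 < ε ∧
      ∀ t ∈ Icc (1:ℝ) 2, ∀ μ : ℝ, 0 < μ → μ ≤ ε → c * f μ ≤ f (t * μ) := by
  set S : ℕ → Set ℝ := fun n => Ioc 0 (1/(n:ℝ)) with hS
  have hSpos : ∀ n, S n ⊆ Ioi 0 := fun n μ hμ => hμ.1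
  have hcov : ∀ t ∈ Icc (1:ℝ) 2, ∃ n : ℕ, 1 ≤ n ∧
      ∀ μ ∈ S n, f μ / n ≤ f (t*μ) ∧ f (t*μ) ≤ n * f μ := by
    intro t ht
    have ht0 : (0:ℝ) < t := lt_of_lt_of_le one_pos ht.1
    set L := t ^ m₁ with hL
    have hL0 : 0 < L := Real.rpow_pos_of_pos ht0 m₁
    have hev : ∀ᶠ lam in nhdsWithin (0:ℝ) (Ioi 0),
        f (lam * t) / f lam ∈ Ioo (L/2) (2*L) :=
      (hreg0 t ht0).eventually (Ioo_mem_nhds (by linarith) (by linarith))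
    have hev2 : ∀ᶠ lam in nhdsWithin (0:ℝ) (Ioi 0), (0:ℝ) < lam :=
      eventually_mem_nhdsWithin
    obtain ⟨u, hu, hsub⟩ := mem_nhdsGT_iff_exists_Ioc_subset.mp (hev2.and hev)
    set n : ℕ := ⌈max (2/L) (max (2*L) (1/u))⌉₊ + 1 with hn
    have hn1 : 1 ≤ n := Nat.le_add_left 1 _
    have hnr : max (2/L) (max (2*L) (1/u)) ≤ (n:ℝ) := by
      push_cast [hn]
      exact le_trans (Nat.le_ceil _) (by linarith)
    have hnr0 : (0:ℝ) < n := by exact_mod_cast hn1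
    have hnr1 : 2/L ≤ (n:ℝ) := le_trans (le_max_left _ _) hnr
    have hnr2 : 2*L ≤ (n:ℝ) := le_trans (le_trans (le_max_left _ _) (le_max_right _ _)) hnr
    have hnr3 : 1/u ≤ (n:ℝ) := le_trans (le_trans (le_max_right _ _) (le_max_right _ _)) hnr
    refine ⟨n, hn1, fun μ hμ => ?_⟩
    have hμ0 : 0 < μ := hμ.1
    have hμu : μ ≤ u := by
      refine le_trans hμ.2 ?_
      rw [div_le_iff₀ hnr0]
      rw [div_le_iff₀ hu] at hnr3
      nlinarith
    obtain ⟨-, hr1, hr2⟩ := hsub ⟨hμ0, hμu⟩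
    have hfμ : 0 < f μ := hf_pos μ hμ0
    have h1 : L/2 * f μ < f (μ * t) := (lt_div_iff₀ hfμ).mp hr1
    have h2 : f (μ * t) < 2*L * f μ := (div_lt_iff₀ hfμ).mp hr2
    have hinv : 1/(n:ℝ) ≤ L/2 := by
      rw [div_le_iff₀ hnr0]
      rw [div_le_iff₀ hL0] at hnr1
      nlinarith
    rw [mul_comm t μ]
    constructor
    · calc f μ / n = 1/(n:ℝ) * f μ := by ring
        _ ≤ L/2 * f μ := mul_le_mul_of_nonneg_right hinv (le_of_lt hfμ)
        _ ≤ f (μ * t) := le_of_lt h1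
    · calc f (μ * t) ≤ 2*L * f μ := le_of_lt h2
        _ ≤ n * f μ := mul_le_mul_of_nonneg_right hnr2 (le_of_lt hfμ)
  obtain ⟨a, b, ha, hab, hb, n, hn1, hbd⟩ := baire_step f hf_cont S hSpos hcov
  have hnr0 : (0:ℝ) < n := by exact_mod_cast hn1
  have hN : (1:ℝ) ≤ n := by exact_mod_cast hn1
  obtain ⟨c, hc, hbound⟩ := extend_step f hf_pos a b n ha hab hb hN
    (S n) (Ioc 0 (1/(4*(n:ℝ)))) (fun μ hμ => hμ.1)
    (fun μ hμ u h14 h4 => ⟨mul_pos (by linarith) hμ.1, by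
      calc u * μ ≤ 4 * μ := mul_le_mul_of_nonneg_right h4 (le_of_lt hμ.1)
        _ ≤ 4 * (1/(4*(n:ℝ))) := by linarith [hμ.2]
        _ = 1/(n:ℝ) := by field_simp⟩)
    hbd
  exact ⟨c, hc, 1/(4*(n:ℝ)), by positivity, fun t ht μ hμ0 hμε => hbound t ht μ ⟨hμ0, hμε⟩⟩

lemma unifInf (f : ℝ → ℝ) (hf_cont : ContinuousOn f (Ioi 0)) (hf_pos : ∀ s : ℝ, 0 < s → 0 < f s)
    (m₂ : ℝ)
    (hregInf : ∀ s : ℝ, 0 < s →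
      Tendsto (fun lam : ℝ => f (lam * s) / f lam) atTop (nhds (s ^ m₂))) :
    ∃ c : ℝ, 0 < c ∧ ∃ M : ℝ, 0 < M ∧
      ∀ t ∈ Icc (1:ℝ) 2, ∀ μ : ℝ, M ≤ μ → c * f μ ≤ f (t * μ) := by
  set S : ℕ → Set ℝ := fun n => Ici (max (n:ℝ) 1) with hS
  have hSpos : ∀ n, S n ⊆ Ioi 0 := fun n μ hμ =>
    by exact mem_Ioi.mpr (lt_of_lt_of_le one_pos (le_trans (le_max_right _ _) hμ))
  have hcov : ∀ t ∈ Icc (1:ℝ) 2, ∃ n : ℕ, 1 ≤ n ∧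
      ∀ μ ∈ S n, f μ / n ≤ f (t*μ) ∧ f (t*μ) ≤ n * f μ := by
    intro t ht
    have ht0 : (0:ℝ) < t := lt_of_lt_of_le one_pos ht.1
    set L := t ^ m₂ with hL
    have hL0 : 0 < L := Real.rpow_pos_of_pos ht0 m₂
    have hev : ∀ᶠ lam in (atTop : Filter ℝ),
        f (lam * t) / f lam ∈ Ioo (L/2) (2*L) :=
      (hregInf t ht0).eventually (Ioo_mem_nhds (by linarith) (by linarith))
    obtain ⟨T, hsub⟩ := eventually_atTop.mp hev
    set n : ℕ := ⌈max (2/L) (max (2*L) T)⌉₊ + 1 with hn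
    have hn1 : 1 ≤ n := Nat.le_add_left 1 _
    have hnr : max (2/L) (max (2*L) T) ≤ (n:ℝ) := by
      push_cast [hn]
      exact le_trans (Nat.le_ceil _) (by linarith)
    have hnr0 : (0:ℝ) < n := by exact_mod_cast hn1
    have hnr1 : 2/L ≤ (n:ℝ) := le_trans (le_max_left _ _) hnr
    have hnr2 : 2*L ≤ (n:ℝ) := le_trans (le_trans (le_max_left _ _) (le_max_right _ _)) hnr
    have hnr3 : T ≤ (n:ℝ) := le_trans (le_trans (le_max_right _ _) (le_max_right _ _)) hnr
    refine ⟨n, hn1, fun μ hμ => ?_⟩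
    have hμ0 : 0 < μ := hSpos n hμ
    have hμT : T ≤ μ := le_trans hnr3 (le_trans (le_max_left _ _) hμ)
    obtain ⟨hr1, hr2⟩ := hsub μ hμT
    have hfμ : 0 < f μ := hf_pos μ hμ0
    have h1 : L/2 * f μ < f (μ * t) := (lt_div_iff₀ hfμ).mp hr1
    have h2 : f (μ * t) < 2*L * f μ := (div_lt_iff₀ hfμ).mp hr2
    have hinv : 1/(n:ℝ) ≤ L/2 := by
      rw [div_le_iff₀ hnr0]
      rw [div_le_iff₀ hL0] at hnr1
      nlinarith
    rw [mul_comm t μ]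
    constructor
    · calc f μ / n = 1/(n:ℝ) * f μ := by ring
        _ ≤ L/2 * f μ := mul_le_mul_of_nonneg_right hinv (le_of_lt hfμ)
        _ ≤ f (μ * t) := le_of_lt h1
    · calc f (μ * t) ≤ 2*L * f μ := le_of_lt h2
        _ ≤ n * f μ := mul_le_mul_of_nonneg_right hnr2 (le_of_lt hfμ)
  obtain ⟨a, b, ha, hab, hb, n, hn1, hbd⟩ := baire_step f hf_cont S hSpos hcov
  have hN : (1:ℝ) ≤ n := by exact_mod_cast hn1
  have hm1 : (1:ℝ) ≤ max (n:ℝ) 1 := le_max_right _ _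
  obtain ⟨c, hc, hbound⟩ := extend_step f hf_pos a b n ha hab hb hN
    (S n) (Ici (4 * max (n:ℝ) 1))
    (fun μ hμ => lt_of_lt_of_le (by linarith : (0:ℝ) < 4 * max (n:ℝ) 1) hμ)
    (fun μ hμ u h14 h4 => by
      simp only [mem_Ici] at hμ ⊢
      have hμ0 : (0:ℝ) ≤ μ := by linarith
      calc max (n:ℝ) 1 = (1/4) * (4 * max (n:ℝ) 1) := by ring
        _ ≤ (1/4) * μ := by nlinarith
        _ ≤ u * μ := mul_le_mul_of_nonneg_right h14 hμ0)
    hbd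
  exact ⟨c, hc, 4 * max (n:ℝ) 1, by linarith, fun t ht μ hμM => hbound t ht μ hμM⟩

lemma unif_all (f : ℝ → ℝ) (hf_cont : ContinuousOn f (Ioi 0)) (hf_pos : ∀ s : ℝ, 0 < s → 0 < f s)
    (m₁ m₂ : ℝ)
    (hreg0 : ∀ s : ℝ, 0 < s →
      Tendsto (fun lam : ℝ => f (lam * s) / f lam) (nhdsWithin 0 (Ioi 0)) (nhds (s ^ m₁)))
    (hregInf : ∀ s : ℝ, 0 < s →
      Tendsto (fun lam : ℝ => f (lam * s) / f lam) atTop (nhds (s ^ m₂))) :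
    ∃ c : ℝ, 0 < c ∧ c ≤ 1 ∧ ∀ t ∈ Icc (1:ℝ) 2, ∀ μ : ℝ, 0 < μ → c * f μ ≤ f (t * μ) := by
  obtain ⟨c₁, hc₁, ε, hε, hb₁⟩ := unif0 f hf_cont hf_pos m₁ hreg0
  obtain ⟨c₂, hc₂, M, hM, hb₂⟩ := unifInf f hf_cont hf_pos m₂ hregInf
  set M' := max M ε with hM'
  have hεM' : ε ≤ M' := le_max_right _ _
  have hM'0 : 0 < M' := lt_of_lt_of_le hM (le_max_left _ _)
  have hsub1 : Icc ε (2*M') ⊆ Ioi 0 := fun x hx => lt_of_lt_of_le hε hx.1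
  have hne1 : (Icc ε (2*M')).Nonempty := ⟨ε, le_refl ε, by linarith⟩
  obtain ⟨x, hx, hminx⟩ := isCompact_Icc.exists_isMinOn hne1 (hf_cont.mono hsub1)
  obtain ⟨y, hy, hmaxy⟩ := isCompact_Icc.exists_isMaxOn
    (⟨ε, le_refl ε, hεM'⟩ : (Icc ε M').Nonempty)
    (hf_cont.mono (fun z hz => lt_of_lt_of_le hε hz.1))
  have hv : 0 < f x := hf_pos x (hsub1 hx)
  have hV : 0 < f y := hf_pos y (lt_of_lt_of_le hε hy.1)
  refine ⟨min (min c₁ c₂) (min (f x / f y) 1), by positivity, le_trans (min_le_right _ _) (min_le_right _ _),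
    fun t ht μ hμ => ?_⟩
  have hfμ : 0 < f μ := hf_pos μ hμ
  rcases le_or_gt μ ε with hcase | hcase
  · calc min (min c₁ c₂) (min (f x / f y) 1) * f μ ≤ c₁ * f μ :=
        mul_le_mul_of_nonneg_right (le_trans (min_le_left _ _) (min_le_left _ _)) (le_of_lt hfμ)
      _ ≤ f (t * μ) := hb₁ t ht μ hμ hcase
  · rcases le_or_gt M' μ with hcase2 | hcase2
    · calc min (min c₁ c₂) (min (f x / f y) 1) * f μ ≤ c₂ * f μ :=
          mul_le_mul_of_nonneg_right (le_trans (min_le_left _ _) (min_le_right _ _)) (le_of_lt hfμ)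
        _ ≤ f (t * μ) := hb₂ t ht μ (le_trans (le_max_left _ _) hcase2)
    · have htμ : t * μ ∈ Icc ε (2*M') := by
        constructor
        · calc ε ≤ μ := le_of_lt hcase
            _ ≤ t * μ := le_mul_of_one_le_left (le_of_lt hμ) ht.1
        · calc t * μ ≤ 2 * μ := mul_le_mul_of_nonneg_right ht.2 (le_of_lt hμ)
            _ ≤ 2 * M' := by linarith
      have hμmem : μ ∈ Icc ε M' := ⟨le_of_lt hcase, le_of_lt hcase2⟩
      calc min (min c₁ c₂) (min (f x / f y) 1) * f μ ≤ (f x / f y) * f μ :=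
            mul_le_mul_of_nonneg_right (le_trans (min_le_right _ _) (min_le_left _ _)) (le_of_lt hfμ)
        _ ≤ (f x / f y) * f y :=
            mul_le_mul_of_nonneg_left (isMaxOn_iff.mp hmaxy μ hμmem) (by positivity)
        _ = f x := by field_simp
        _ ≤ f (t * μ) := isMinOn_iff.mp hminx (t*μ) htμ

lemma master (f : ℝ → ℝ) (hf_pos : ∀ s : ℝ, 0 < s → 0 < f s)
    (g c' lm lp : ℝ) (hg : 1 ≤ g) (hc'0 : 0 < c') (hc'1 : c' ≤ 1)
    (hlm : 0 < lm) (hlmp : lm ≤ lp) (N₀ : ℕ) (hN₀ : lp ≤ 2^N₀ * lm)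
    (G : ∀ μ : ℝ, 0 < μ → (μ ≤ lm ∨ lp ≤ μ) → g * f μ ≤ f (2*μ))
    (A : ∀ μ : ℝ, 0 < μ → c' * f μ ≤ f (2*μ)) :
    ∀ n : ℕ, ∀ lam : ℝ, 0 < lam → (c'/g)^N₀ * g^n * f lam ≤ f (2^n * lam) := by
  have hg0 : (0:ℝ) < g := lt_of_lt_of_le one_pos hg
  have hcg0 : 0 < c'/g := by positivity
  have hcg1 : c'/g ≤ 1 := by rw [div_le_one hg0]; linarith
  have L2 : ∀ n : ℕ, ∀ μ : ℝ, lp ≤ μ → g^n * f μ ≤ f (2^n * μ) := by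
    intro n
    induction n with
    | zero => intro μ _; simp
    | succ n ih =>
      intro μ hμ
      have hμ0 : 0 < μ := lt_of_lt_of_le (lt_of_lt_of_le hlm hlmp) hμ
      have h2n : (0:ℝ) < 2^n := by positivity
      have hstep := G (2^n * μ) (by positivity) (Or.inr (le_trans hμ (le_mul_of_one_le_left (le_of_lt hμ0) (one_le_pow₀ one_le_two))))
      have e : 2 * (2^n * μ) = 2^(n+1) * μ := by ring
      rw [e] at hstep
      calc g^(n+1) * f μ = g * (g^n * f μ) := by ring
        _ ≤ g * f (2^n * μ) := mul_le_mul_of_nonneg_left (ih μ hμ) (le_of_lt hg0)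
        _ ≤ f (2^(n+1) * μ) := hstep
  have L3 : ∀ n : ℕ, ∀ μ : ℝ, 0 < μ → c'^n * f μ ≤ f (2^n * μ) := by
    intro n
    induction n with
    | zero => intro μ _; simp
    | succ n ih =>
      intro μ hμ0
      have hstep := A (2^n * μ) (by positivity)
      have e : 2 * (2^n * μ) = 2^(n+1) * μ := by ring
      rw [e] at hstep
      calc c'^(n+1) * f μ = c' * (c'^n * f μ) := by ring
        _ ≤ c' * f (2^n * μ) := mul_le_mul_of_nonneg_left (ih μ hμ0) (le_of_lt hc'0)
        _ ≤ f (2^(n+1) * μ) := hstep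
  have L1 : ∀ n : ℕ, ∀ lam : ℝ, 0 < lam → 2^n * lam ≤ 2*lm → g^n * f lam ≤ f (2^n * lam) := by
    intro n
    induction n with
    | zero => intro lam _ _; simp
    | succ n ih =>
      intro lam hlam hbound
      have h2n : (0:ℝ) < 2^n := by positivity
      have hle : 2^n * lam ≤ lm := by
        have : (2:ℝ)^(n+1) = 2 * 2^n := by ring
        rw [this] at hbound
        linarith
      have hstep := G (2^n * lam) (by positivity) (Or.inl hle)
      have e : 2 * (2^n * lam) = 2^(n+1) * lam := by ring
      rw [e] at hstep
      calc g^(n+1) * f lam = g * (g^n * f lam) := by ring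
        _ ≤ g * f (2^n * lam) := mul_le_mul_of_nonneg_left (ih lam hlam (le_trans hle (by linarith))) (le_of_lt hg0)
        _ ≤ f (2^(n+1) * lam) := hstep
  have M' : ∀ n : ℕ, ∀ μ : ℝ, lm < μ → (c'/g)^N₀ * g^n * f μ ≤ f (2^n * μ) := by
    intro n μ hμ
    have hμ0 : 0 < μ := lt_trans hlm hμ
    have hfμ : 0 ≤ f μ := le_of_lt (hf_pos μ hμ0)
    rcases le_or_gt n N₀ with hcase | hcase
    · have key : (c'/g)^N₀ * g^n ≤ c'^n := by
        calc (c'/g)^N₀ * g^n ≤ (c'/g)^n * g^n :=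
              mul_le_mul_of_nonneg_right (pow_le_pow_of_le_one (le_of_lt hcg0) hcg1 hcase) (by positivity)
          _ = c'^n := by rw [← mul_pow, div_mul_cancel₀ _ (ne_of_gt hg0)]
      calc (c'/g)^N₀ * g^n * f μ ≤ c'^n * f μ := mul_le_mul_of_nonneg_right key hfμ
        _ ≤ f (2^n * μ) := L3 n μ hμ0
    · set r := n - N₀ with hr
      have hn : n = N₀ + r := (Nat.add_sub_cancel' (le_of_lt hcase)).symm
      have hν : lp ≤ 2^N₀ * μ := le_trans hN₀ (by
        have h2N : (0:ℝ) < 2^N₀ := by positivity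
        nlinarith)
      have h1 := L3 N₀ μ hμ0
      have h2 := L2 r (2^N₀ * μ) hν
      have e : 2^r * (2^N₀ * μ) = 2^n * μ := by rw [hn]; ring
      rw [e] at h2
      have key : (c'/g)^N₀ * g^n = g^r * c'^N₀ := by
        rw [hn, div_pow, pow_add]
        field_simp
      rw [key]
      calc g^r * c'^N₀ * f μ = g^r * (c'^N₀ * f μ) := by ring
        _ ≤ g^r * f (2^N₀ * μ) := mul_le_mul_of_nonneg_left h1 (by positivity)
        _ ≤ f (2^n * μ) := h2
  intro n lam hlam
  have hfl : 0 ≤ f lam := le_of_lt (hf_pos lam hlam)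
  rcases le_or_gt (2^n * lam) (2*lm) with hcase | hcase
  · calc (c'/g)^N₀ * g^n * f lam ≤ 1 * g^n * f lam :=
        mul_le_mul_of_nonneg_right (mul_le_mul_of_nonneg_right (pow_le_one₀ (le_of_lt hcg0) hcg1) (by positivity)) hfl
      _ = g^n * f lam := by ring
      _ ≤ f (2^n * lam) := L1 n lam hlam hcase
  · rcases lt_or_ge lm lam with hcase2 | hcase2
    · exact M' n lam hcase2
    · have hex : ∃ k : ℕ, 2*lm < 2^k * lam := ⟨n, hcase⟩
      set k := Nat.find hex with hk
      have hkspec : 2*lm < 2^k * lam := Nat.find_spec hex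
      have hkpos : 0 < k := by
        rcases Nat.eq_zero_or_pos k with h0 | h
        · exfalso; rw [h0] at hkspec; simp at hkspec; linarith
        · exact h
      have hkn : k ≤ n := Nat.find_le hcase
      set j := k - 1 with hj
      have hjk : j < k := Nat.sub_lt hkpos one_pos
      have hjn : j ≤ n := le_trans (le_of_lt hjk) hkn
      have hjle : 2^j * lam ≤ 2*lm := le_of_not_gt (Nat.find_min hex hjk)
      have hkj : k = j + 1 := (Nat.succ_pred_eq_of_pos hkpos).symm
      have hμgt : lm < 2^j * lam := by
        rw [hkj] at hkspec
        have : (2:ℝ)^(j+1) = 2 * 2^j := by ring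
        rw [this] at hkspec
        linarith
      have h1 := L1 j lam hlam hjle
      have h2 := M' (n - j) (2^j * lam) hμgt
      have e : 2^(n-j) * (2^j * lam) = 2^n * lam := by
        rw [← mul_assoc, ← pow_add, Nat.sub_add_cancel hjn]
      rw [e] at h2
      have key : (c'/g)^N₀ * g^n = (c'/g)^N₀ * g^(n-j) * g^j := by
        rw [mul_assoc, ← pow_add, Nat.sub_add_cancel hjn]
      rw [key]
      calc (c'/g)^N₀ * g^(n-j) * g^j * f lam = ((c'/g)^N₀ * g^(n-j)) * (g^j * f lam) := by ring
        _ ≤ ((c'/g)^N₀ * g^(n-j)) * f (2^j * lam) := mul_le_mul_of_nonneg_left h1 (by positivity)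
        _ ≤ f (2^n * lam) := h2

/-- regular variation at `0` and `∞` with indices `> 1` gives
`f(sλ) ≥ c s^q f(λ)` for all `s ≥ 1` and `λ > 0`; in particular `f` is
superlinear. -/
theorem stmt_9 (f : ℝ → ℝ)
    (hf_cont : ContinuousOn f (Ioi 0)) (hf_pos : ∀ s : ℝ, 0 < s → 0 < f s)
    (m₁ m₂ : ℝ) (hm₁ : 1 < m₁) (hm₂ : 1 < m₂)
    (hreg0 : ∀ s : ℝ, 0 < s →
      Tendsto (fun lam : ℝ => f (lam * s) / f lam) (nhdsWithin 0 (Ioi 0)) (nhds (s ^ m₁)))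
    (hregInf : ∀ s : ℝ, 0 < s →
      Tendsto (fun lam : ℝ => f (lam * s) / f lam) atTop (nhds (s ^ m₂))) :
    (∃ q : ℝ, 1 < q ∧ ∃ c : ℝ, 0 < c ∧
      ∀ s : ℝ, 1 ≤ s → ∀ lam : ℝ, 0 < lam →
        c * s ^ q * f lam ≤ f (s * lam)) ∧
    (∀ A : ℝ, ∃ s₀ : ℝ, ∀ s : ℝ, s₀ ≤ s → ∀ lam : ℝ, 0 < lam →
      A ≤ f (lam * s) / (s * f lam)) := by
  have main : ∃ q : ℝ, 1 < q ∧ ∃ c : ℝ, 0 < c ∧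
      ∀ s : ℝ, 1 ≤ s → ∀ lam : ℝ, 0 < lam → c * s ^ q * f lam ≤ f (s * lam) := by
    obtain ⟨c₀, hc₀0, hc₀1, hstar⟩ := unif_all f hf_cont hf_pos m₁ m₂ hreg0 hregInf
    set q : ℝ := (1 + min m₁ m₂) / 2 with hqdef
    have hmin1 : 1 < min m₁ m₂ := lt_min hm₁ hm₂
    have hq1 : 1 < q := by rw [hqdef]; linarith
    have hq0 : 0 ≤ q := by linarith
    have hqm₁ : q < m₁ := by
      have := min_le_left m₁ m₂; rw [hqdef]; linarith
    have hqm₂ : q < m₂ := by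
      have := min_le_right m₁ m₂; rw [hqdef]; linarith
    set g : ℝ := (2:ℝ) ^ q with hgdef
    have hg0 : 0 < g := Real.rpow_pos_of_pos two_pos q
    have hg1 : 1 ≤ g := by
      rw [hgdef, show (1:ℝ) = (2:ℝ) ^ (0:ℝ) by simp]
      exact le_of_lt ((Real.rpow_lt_rpow_left_iff one_lt_two).mpr (by linarith))
    -- good steps near 0
    have hg0' : g < (2:ℝ) ^ m₁ := (Real.rpow_lt_rpow_left_iff one_lt_two).mpr hqm₁
    have hgInf' : g < (2:ℝ) ^ m₂ := (Real.rpow_lt_rpow_left_iff one_lt_two).mpr hqm₂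
    have hev0 : ∀ᶠ lam in nhdsWithin (0:ℝ) (Ioi 0),
        g < f (lam * 2) / f lam := (hreg0 2 two_pos).eventually (eventually_gt_nhds hg0')
    obtain ⟨lm, hlm0, hlmsub⟩ := mem_nhdsGT_iff_exists_Ioc_subset.mp
      (eventually_mem_nhdsWithin.and hev0)
    have hevInf : ∀ᶠ lam in (atTop : Filter ℝ),
        g < f (lam * 2) / f lam := (hregInf 2 two_pos).eventually (eventually_gt_nhds hgInf')
    obtain ⟨T, hTsub⟩ := eventually_atTop.mp hevInf
    set lp : ℝ := max T lm with hlpdef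
    have hlmlp : lm ≤ lp := le_max_right _ _
    have G : ∀ μ : ℝ, 0 < μ → (μ ≤ lm ∨ lp ≤ μ) → g * f μ ≤ f (2 * μ) := by
      intro μ hμ0 hμ
      have hfμ : 0 < f μ := hf_pos μ hμ0
      rcases hμ with hμ | hμ
      · have := (hlmsub ⟨hμ0, hμ⟩).2
        rw [mul_comm 2 μ]
        exact le_of_lt ((lt_div_iff₀ hfμ).mp this)
      · have := hTsub μ (le_trans (le_max_left _ _) hμ)
        rw [mul_comm 2 μ]
        exact le_of_lt ((lt_div_iff₀ hfμ).mp this)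
    have A : ∀ μ : ℝ, 0 < μ → c₀ * f μ ≤ f (2 * μ) := fun μ hμ =>
      hstar 2 ⟨one_le_two, le_refl 2⟩ μ hμ
    obtain ⟨N₀, hN₀⟩ := pow_unbounded_of_one_lt (lp / lm) (one_lt_two)
    have hN₀' : lp ≤ 2 ^ N₀ * lm := by
      rw [div_lt_iff₀ hlm0] at hN₀; linarith
    have hmaster := master f hf_pos g c₀ lm lp hg1 hc₀0 hc₀1 hlm0 hlmlp N₀ hN₀' G A
    set κ : ℝ := (c₀ / g) ^ N₀ with hκdef
    have hκ0 : 0 < κ := by positivity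
    refine ⟨q, hq1, c₀ * κ * (1 / g), by positivity, fun s hs lam hlam => ?_⟩
    -- dyadic decomposition of s
    have hex : ∃ n : ℕ, s < 2 ^ n := pow_unbounded_of_one_lt s one_lt_two
    set k : ℕ := Nat.find hex with hkd
    have hkspec : s < 2 ^ k := Nat.find_spec hex
    have hkpos : 0 < k := by
      rcases Nat.eq_zero_or_pos k with h0 | h
      · exfalso; rw [h0] at hkspec; simp at hkspec; linarith
      · exact h
    set n : ℕ := k - 1 with hnd
    have hnk : n < k := Nat.sub_lt hkpos one_pos
    have h2n : (2:ℝ) ^ n ≤ s := le_of_not_gt (Nat.find_min hex hnk)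
    have hkn1 : k = n + 1 := (Nat.succ_pred_eq_of_pos hkpos).symm
    have hs2 : s < 2 ^ (n+1) := by rw [← hkn1]; exact hkspec
    have h2npos : (0:ℝ) < 2 ^ n := by positivity
    set t : ℝ := s / 2 ^ n with htd
    have ht1 : 1 ≤ t := by rw [htd, le_div_iff₀ h2npos]; linarith
    have ht2 : t ≤ 2 := by
      rw [htd, div_le_iff₀ h2npos]
      have : (2:ℝ) ^ (n+1) = 2 * 2 ^ n := by ring
      linarith [hs2.le.trans this.le]
    have hμpos : 0 < 2 ^ n * lam := by positivity
    have e : t * (2 ^ n * lam) = s * lam := by rw [htd]; field_simp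
    have h1 : c₀ * f (2 ^ n * lam) ≤ f (s * lam) := by
      rw [← e]; exact hstar t ⟨ht1, ht2⟩ (2 ^ n * lam) hμpos
    have h2 : κ * g ^ n * f lam ≤ f (2 ^ n * lam) := hmaster n lam hlam
    -- compare g^n with s^q
    have hgn : g ^ n = ((2:ℝ) ^ n) ^ q := by
      rw [hgdef, ← Real.rpow_natCast ((2:ℝ) ^ q) n, ← Real.rpow_natCast (2:ℝ) n,
        ← Real.rpow_mul (by norm_num), ← Real.rpow_mul (by norm_num), mul_comm]
    have hsq : s ^ q ≤ g * g ^ n := by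
      have hstep : s ^ q ≤ ((2:ℝ) ^ (n+1)) ^ q :=
        Real.rpow_le_rpow (by linarith) (le_of_lt hs2) hq0
      have : ((2:ℝ) ^ (n+1)) ^ q = g * g ^ n := by
        rw [show ((2:ℝ) ^ (n+1)) = 2 * 2 ^ n by ring,
          Real.mul_rpow (by norm_num) (le_of_lt h2npos), hgn, hgdef]
      linarith [this ▸ hstep]
    have hfl : 0 ≤ f lam := le_of_lt (hf_pos lam hlam)
    calc c₀ * κ * (1 / g) * s ^ q * f lam
        ≤ c₀ * κ * (1 / g) * (g * g ^ n) * f lam := by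
          have h := mul_le_mul_of_nonneg_right
            (mul_le_mul_of_nonneg_left hsq (by positivity : (0:ℝ) ≤ c₀ * κ * (1/g))) hfl
          calc c₀ * κ * (1 / g) * s ^ q * f lam = c₀ * κ * (1/g) * (s ^ q) * f lam := by ring
            _ ≤ c₀ * κ * (1/g) * (g * g ^ n) * f lam := h
      _ = c₀ * (κ * g ^ n * f lam) := by field_simp
      _ ≤ c₀ * f (2 ^ n * lam) := mul_le_mul_of_nonneg_left h2 (le_of_lt hc₀0)
      _ ≤ f (s * lam) := h1
  refine ⟨main, ?_⟩
  obtain ⟨q, hq1, c, hc0, hbd⟩ := main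
  intro A
  set B : ℝ := ((|A| + 1) / c) ^ (1 / (q - 1)) with hBdef
  have hB0 : 0 ≤ B := le_of_lt (Real.rpow_pos_of_pos (by positivity) _)
  refine ⟨max 1 B, fun s hs lam hlam => ?_⟩
  have hs1 : 1 ≤ s := le_trans (le_max_left _ _) hs
  have hsB : B ≤ s := le_trans (le_max_right _ _) hs
  have hs0 : 0 < s := lt_of_lt_of_le one_pos hs1
  have hfl : 0 < f lam := hf_pos lam hlam
  rw [mul_comm lam s, le_div_iff₀ (by positivity)]
  have hq1' : q - 1 ≠ 0 := by intro h; rw [sub_eq_zero] at h; exact absurd h.symm (ne_of_lt hq1)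
  have hBq : (|A| + 1) / c ≤ s ^ (q - 1) := by
    have := Real.rpow_le_rpow hB0 hsB (by linarith : 0 ≤ q - 1)
    rwa [hBdef, ← Real.rpow_mul (by positivity), one_div_mul_cancel hq1', Real.rpow_one] at this
  have hAs : A ≤ c * s ^ (q - 1) := by
    rw [div_le_iff₀ hc0] at hBq
    calc A ≤ |A| + 1 := by linarith [le_abs_self A]
      _ ≤ c * s ^ (q - 1) := by linarith [hBq]
  have hsplit : s ^ q = s ^ (q - 1) * s := by
    nth_rewrite 1 [show q = (q - 1) + 1 by ring]
    rw [Real.rpow_add_one (ne_of_gt hs0)]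
  calc A * (s * f lam) ≤ (c * s ^ (q - 1)) * (s * f lam) := by
        apply mul_le_mul_of_nonneg_right hAs (by positivity)
    _ = c * s ^ q * f lam := by rw [hsplit]; ring
    _ ≤ f (s * lam) := hbd s hs1 lam hlam
end

section
/- Let L : (0,∞) → (0,∞) be continuous with controled variation, i.e. for every compact subset 𝒦 of (0,∞), inf{ L(λs)/L(λ) : λ > 0, s ∈ 𝒦 } > 0, and let p > 1. Then there exist a₀ > 0, q > 1 and c > 0 (with q and c independent of a) such that for every a ∈ (0, a₀], the function f(s) = s^p L(s)^a satisfies f(sλ) ≥ c s^q f(λ) for all s ≥ 1 and all λ > 0. -/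
/-!
Applying controled variation to the compact set `[1, 2]` gives `c₀ ∈ (0, 1]` with
`L(λt) ≥ c₀ L(λ)` for `t ∈ [1, 2]`. Iterating along dyadic scales yields the power lower bound
`L(λs) ≥ c₀ s^β L(λ)` for `s ≥ 1`, where `β = log₂ c₀ ≤ 0`. Raising it to a power `a ≤ 1` costs
at most the factor `s^{aβ}`, which the margin `p - q` absorbs once `a` is small.
-/

open Set Real

section LowerBound

variable {L : ℝ → ℝ} {c₀ : ℝ}

lemma exists_mul_le_apply_mul_of_mem_Icc_one_two (hL_pos : ∀ s : ℝ, 0 < s → 0 < L s)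
    (hcontrol : ∀ K : Set ℝ, IsCompact K → K ⊆ Ioi 0 →
      ∃ c : ℝ, 0 < c ∧ ∀ lam : ℝ, 0 < lam → ∀ s ∈ K, c ≤ L (lam * s) / L lam) :
    ∃ c₀ : ℝ, 0 < c₀ ∧ c₀ ≤ 1 ∧
      ∀ lam : ℝ, 0 < lam → ∀ t ∈ Icc (1 : ℝ) 2, c₀ * L lam ≤ L (lam * t) := by
  obtain ⟨c₀, hc₀, hc⟩ := hcontrol (Icc 1 2) isCompact_Icc fun x hx => one_pos.trans_le hx.1
  refine ⟨c₀, hc₀, ?_, fun lam hlam t ht => (le_div_iff₀ (hL_pos lam hlam)).mp (hc lam hlam t ht)⟩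
  simpa [div_self (hL_pos 1 one_pos).ne'] using hc 1 one_pos 1 ⟨le_rfl, one_le_two⟩

variable (hstep : ∀ lam : ℝ, 0 < lam → ∀ t ∈ Icc (1 : ℝ) 2, c₀ * L lam ≤ L (lam * t))
include hstep

lemma pow_succ_mul_le_of_mem_Icc_two_pow (hc₀ : 0 ≤ c₀) (n : ℕ) {lam s : ℝ} (hlam : 0 < lam)
    (hs : s ∈ Icc ((2 : ℝ) ^ n) (2 ^ (n + 1))) : c₀ ^ (n + 1) * L lam ≤ L (lam * s) := by
  induction n generalizing s with
  | zero => simpa using hstep lam hlam s (by simpa using hs)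
  | succ n ih =>
    have hhalf : s / 2 ∈ Icc ((2 : ℝ) ^ n) (2 ^ (n + 1)) := by
      rw [pow_succ, pow_succ] at hs
      exact ⟨(le_div_iff₀ two_pos).mpr hs.1, (div_le_iff₀ two_pos).mpr hs.2⟩
    calc c₀ ^ (n + 1 + 1) * L lam = c₀ * (c₀ ^ (n + 1) * L lam) := by ring
      _ ≤ c₀ * L (lam * (s / 2)) := mul_le_mul_of_nonneg_left (ih hhalf) hc₀
      _ ≤ L (lam * (s / 2) * 2) :=
        hstep _ (mul_pos hlam ((pow_pos two_pos n).trans_le hhalf.1)) 2 ⟨one_le_two, le_rfl⟩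
      _ = L (lam * s) := by ring_nf

lemma mul_rpow_logb_mul_le (hc₀ : 0 < c₀) (hc₀1 : c₀ ≤ 1) {lam s : ℝ} (hlam : 0 < lam)
    (hL : 0 ≤ L lam) (hs : 1 ≤ s) : c₀ * s ^ logb 2 c₀ * L lam ≤ L (lam * s) := by
  obtain ⟨n, hn, hn'⟩ := exists_nat_pow_near hs one_lt_two
  have hpow : s ^ logb 2 c₀ ≤ c₀ ^ n :=
    calc s ^ logb 2 c₀ ≤ ((2 : ℝ) ^ n) ^ logb 2 c₀ :=
          rpow_le_rpow_of_nonpos (by positivity) hn (logb_nonpos one_lt_two hc₀.le hc₀1)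
      _ = c₀ ^ n := by
          rw [← rpow_natCast_mul zero_le_two, mul_comm, rpow_mul_natCast zero_le_two,
            rpow_logb two_pos (by norm_num) hc₀]
  calc c₀ * s ^ logb 2 c₀ * L lam ≤ c₀ * c₀ ^ n * L lam := by gcongr
    _ = c₀ ^ (n + 1) * L lam := by ring
    _ ≤ L (lam * s) := pow_succ_mul_le_of_mem_Icc_two_pow hstep hc₀.le n hlam ⟨hn, hn'.le⟩

end LowerBound

lemma mul_rpow_mul_mul_rpow_le {c₀ β p q a s lam x y : ℝ} (hc₀ : 0 < c₀) (hc₀1 : c₀ ≤ 1)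
    (ha₀ : 0 ≤ a) (ha₁ : a ≤ 1) (hq : q ≤ p + a * β) (hs : 1 ≤ s) (hlam : 0 < lam) (hx : 0 < x)
    (hxy : c₀ * s ^ β * x ≤ y) :
    c₀ * s ^ q * (lam ^ p * x ^ a) ≤ (s * lam) ^ p * y ^ a := by
  have hs₀ : 0 < s := one_pos.trans_le hs
  calc c₀ * s ^ q * (lam ^ p * x ^ a) ≤ c₀ ^ a * s ^ (p + a * β) * (lam ^ p * x ^ a) := by
        gcongr
        exact self_le_rpow_of_le_one hc₀.le hc₀1 ha₁
    _ = (s * lam) ^ p * (c₀ * s ^ β * x) ^ a := by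
        rw [mul_rpow hs₀.le hlam.le, mul_rpow (by positivity) hx.le, mul_rpow hc₀.le (by positivity),
          rpow_add hs₀, mul_comm a β, rpow_mul hs₀.le]
        ring
    _ ≤ (s * lam) ^ p * y ^ a := by gcongr

theorem stmt_10_general (L : ℝ → ℝ)
    (hL_pos : ∀ s : ℝ, 0 < s → 0 < L s)
    (hcontrol : ∀ K : Set ℝ, IsCompact K → K ⊆ Ioi 0 →
      ∃ c : ℝ, 0 < c ∧ ∀ lam : ℝ, 0 < lam → ∀ s ∈ K, c ≤ L (lam * s) / L lam)
    (p : ℝ) (hp : 1 < p) :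
    ∃ a₀ : ℝ, 0 < a₀ ∧ ∃ q : ℝ, 1 < q ∧ ∃ c : ℝ, 0 < c ∧
      ∀ a ∈ Ioc (0 : ℝ) a₀,
        ∀ s : ℝ, 1 ≤ s → ∀ lam : ℝ, 0 < lam →
          c * s ^ q * (lam ^ p * L lam ^ a) ≤ (s * lam) ^ p * L (s * lam) ^ a := by
  obtain ⟨c₀, hc₀, hc₀1, hstep⟩ := exists_mul_le_apply_mul_of_mem_Icc_one_two hL_pos hcontrol
  set β := logb 2 c₀
  have hβ : β ≤ 0 := logb_nonpos one_lt_two hc₀.le hc₀1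
  refine ⟨min 1 ((p - 1) / 2 / (1 - β)), lt_min one_pos (by apply div_pos <;> linarith),
    (p + 1) / 2, by linarith, c₀, hc₀, ?_⟩
  rintro a ⟨ha₀, ha⟩ s hs lam hlam
  have hq : (p + 1) / 2 ≤ p + a * β := by
    have := (le_div_iff₀ (by linarith)).mp (ha.trans (min_le_right _ _))
    nlinarith
  refine mul_rpow_mul_mul_rpow_le hc₀ hc₀1 ha₀.le (ha.trans (min_le_left _ _)) hq hs hlam
    (hL_pos lam hlam) ?_
  rw [mul_comm s]
  exact mul_rpow_logb_mul_le hstep hc₀ hc₀1 hlam (hL_pos lam hlam).le hs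

/-- for `L` with controled variation and `p > 1`, the functions
`f(s) = s^p L(s)^a` satisfy `f(sλ) ≥ c s^q f(λ)` (for `s ≥ 1`, `λ > 0`) with
`q > 1`, `c > 0` independent of `a ∈ (0, a₀]`. -/
theorem stmt_10 (L : ℝ → ℝ)
    (hL_cont : ContinuousOn L (Ioi 0)) (hL_pos : ∀ s : ℝ, 0 < s → 0 < L s)
    (hcontrol : ∀ K : Set ℝ, IsCompact K → K ⊆ Ioi 0 →
      ∃ c : ℝ, 0 < c ∧ ∀ lam : ℝ, 0 < lam → ∀ s ∈ K, c ≤ L (lam * s) / L lam)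
    (p : ℝ) (hp : 1 < p) :
    ∃ a₀ : ℝ, 0 < a₀ ∧ ∃ q : ℝ, 1 < q ∧ ∃ c : ℝ, 0 < c ∧
      ∀ a ∈ Ioc (0 : ℝ) a₀,
        ∀ s : ℝ, 1 ≤ s → ∀ lam : ℝ, 0 < lam →
          c * s ^ q * (lam ^ p * L lam ^ a) ≤ (s * lam) ^ p * L (s * lam) ^ a :=
  stmt_10_general L hL_pos hcontrol p hp
end

section
/- Let f : (0,∞) → ℝ be continuous with f(s) > 0 for all s > 0, and suppose f is superlinear, i.e. inf_{λ>0} f(λs)/(s f(λ)) → ∞ as s → ∞. Then there exist q > 1 and constants C, c > 0 such that f(s) ≤ C s^q for all s ∈ (0,1] and f(s) ≥ c s^q for all s ≥ 1. -/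
open Set Filter

/-- a superlinear `f` satisfies `f(s) ≤ C s^q` on `(0,1]` and
`f(s) ≥ c s^q` on `[1,∞)` for some `q > 1`. -/
theorem stmt_11 (f : ℝ → ℝ)
    (hf_cont : ContinuousOn f (Ioi 0)) (hf_pos : ∀ s : ℝ, 0 < s → 0 < f s)
    (hsuper : ∀ A : ℝ, ∃ s₀ : ℝ, ∀ s : ℝ, s₀ ≤ s → ∀ lam : ℝ, 0 < lam →
      A ≤ f (lam * s) / (s * f lam)) :
    ∃ q : ℝ, 1 < q ∧ ∃ C : ℝ, 0 < C ∧ ∃ c : ℝ, 0 < c ∧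
      (∀ s ∈ Ioc (0 : ℝ) 1, f s ≤ C * s ^ q) ∧
      (∀ s : ℝ, 1 ≤ s → c * s ^ q ≤ f s) := by
  obtain ⟨s₀, hs₀⟩ := hsuper 2
  set σ := max s₀ 2 with hσdef
  have hσ2 : (2:ℝ) ≤ σ := le_max_right _ _
  have hσ1 : (1:ℝ) < σ := lt_of_lt_of_le one_lt_two hσ2
  have hσ0 : (0:ℝ) < σ := lt_trans one_pos hσ1
  -- key multiplicative step
  have key : ∀ lam : ℝ, 0 < lam → 2 * σ * f lam ≤ f (σ * lam) := by
    intro lam hlam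
    have h := hs₀ σ (le_max_left _ _) lam hlam
    have hpos : 0 < σ * f lam := mul_pos hσ0 (hf_pos lam hlam)
    rw [le_div_iff₀ hpos] at h
    calc 2 * σ * f lam = 2 * (σ * f lam) := by ring
    _ ≤ f (lam * σ) := h
    _ = f (σ * lam) := by rw [mul_comm]
  -- iterated step
  have iter : ∀ n : ℕ, ∀ lam : ℝ, 0 < lam → (2*σ)^n * f lam ≤ f (σ^n * lam) := by
    intro n
    induction n with
    | zero => intro lam _; simp
    | succ n ih =>
      intro lam hlam
      have h1 := ih lam hlam
      have h2 := key (σ^n * lam) (mul_pos (pow_pos hσ0 n) hlam)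
      have h2σ : (0:ℝ) ≤ 2*σ := by positivity
      calc (2*σ)^(n+1) * f lam = 2*σ * ((2*σ)^n * f lam) := by ring
      _ ≤ 2*σ * f (σ^n * lam) := mul_le_mul_of_nonneg_left h1 h2σ
      _ ≤ f (σ * (σ^n * lam)) := h2
      _ = f (σ^(n+1) * lam) := by congr 1; ring
  -- the exponent
  set q := Real.logb σ (2*σ) with hqdef
  have h2σpos : (0:ℝ) < 2*σ := by positivity
  have hq1 : 1 < q := by
    rw [hqdef, Real.lt_logb_iff_rpow_lt hσ1 h2σpos, Real.rpow_one]
    linarith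
  have hq0 : (0:ℝ) ≤ q := by linarith
  have hσq : σ ^ q = 2*σ := Real.rpow_logb hσ0 (ne_of_gt hσ1) h2σpos
  have hpowq : ∀ n : ℕ, ((2*σ):ℝ)^n = (σ ^ (n:ℝ)) ^ q := by
    intro n
    rw [← hσq, ← Real.rpow_natCast (σ ^ q) n,
      ← Real.rpow_mul (le_of_lt hσ0), ← Real.rpow_mul (le_of_lt hσ0), mul_comm]
  -- min and max of f on [1, σ]
  have hsub : Icc (1:ℝ) σ ⊆ Ioi 0 := fun x hx => lt_of_lt_of_le one_pos hx.1
  have hcompact : IsCompact (Icc (1:ℝ) σ) := isCompact_Icc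
  have hne : (Icc (1:ℝ) σ).Nonempty := ⟨1, le_refl _, le_of_lt hσ1⟩
  obtain ⟨xm, hxm, hmin⟩ := hcompact.exists_isMinOn hne (hf_cont.mono hsub)
  obtain ⟨xM, hxM, hmax⟩ := hcompact.exists_isMaxOn hne (hf_cont.mono hsub)
  set m := f xm with hm
  set M := f xM with hM
  have hmpos : 0 < m := hf_pos xm (hsub hxm)
  have hMpos : 0 < M := hf_pos xM (hsub hxM)
  refine ⟨q, hq1, M, hMpos, m / σ ^ q, by positivity, ?_, ?_⟩
  · -- upper bound on (0,1]
    rintro s ⟨hs0, hs1⟩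
    set n := ⌈Real.logb σ (1/s)⌉₊ with hndef
    set t := σ ^ (n:ℝ) with htdef
    have ht0 : 0 < t := Real.rpow_pos_of_pos hσ0 _
    have hts1 : 1 ≤ t * s := by
      have hlb : Real.logb σ (1/s) ≤ (n:ℝ) := Nat.le_ceil _
      have h1s : (0:ℝ) < 1/s := by positivity
      have : 1/s ≤ t := by
        have := Real.rpow_le_rpow_of_exponent_le (le_of_lt hσ1) hlb
        rwa [Real.rpow_logb hσ0 (ne_of_gt hσ1) h1s] at this
      calc (1:ℝ) = (1/s) * s := by field_simp
      _ ≤ t * s := mul_le_mul_of_nonneg_right this (le_of_lt hs0)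
    have htsσ : t * s ≤ σ := by
      rcases Nat.eq_zero_or_pos n with hn0 | hnpos
      · rw [htdef, hn0]
        simp only [Nat.cast_zero, Real.rpow_zero, one_mul]
        linarith
      · obtain ⟨k, hk⟩ := Nat.exists_eq_succ_of_ne_zero (Nat.pos_iff_ne_zero.mp hnpos)
        have hklt : (k:ℝ) < Real.logb σ (1/s) := by
          rw [← Nat.lt_ceil, ← hndef, hk]; exact Nat.lt_succ_self k
        have h1s : (0:ℝ) < 1/s := by positivity
        have hσk : σ ^ (k:ℝ) < 1/s := by
          have := Real.rpow_lt_rpow_of_exponent_lt hσ1 hklt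
          rwa [Real.rpow_logb hσ0 (ne_of_gt hσ1) h1s] at this
        have ht : t = σ * σ ^ (k:ℝ) := by
          rw [htdef, hk]
          push_cast
          rw [Real.rpow_add hσ0, Real.rpow_one, mul_comm]
        rw [ht]
        calc σ * σ ^ (k:ℝ) * s ≤ σ * (1/s) * s := by
              have hσks : σ ^ (k:ℝ) ≤ 1/s := le_of_lt hσk
              have : σ * σ ^ (k:ℝ) ≤ σ * (1/s) :=
                mul_le_mul_of_nonneg_left hσks (le_of_lt hσ0)
              exact mul_le_mul_of_nonneg_right this (le_of_lt hs0)
        _ = σ := by field_simp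
    have htnat : t = σ ^ n := Real.rpow_natCast σ n
    have hiter := iter n s hs0
    rw [← htnat] at hiter
    have hfts : f (t * s) ≤ M := hmax ⟨hts1, htsσ⟩
    have hkey : (2*σ)^n * f s ≤ M := le_trans hiter hfts
    rw [hpowq n, ← htdef] at hkey
    have htq : 0 < t ^ q := Real.rpow_pos_of_pos ht0 _
    have hfs : f s ≤ M / t ^ q := (le_div_iff₀' htq).mpr hkey
    have hfinal : M / t ^ q ≤ M * s ^ q := by
      rw [div_le_iff₀ htq]
      have : (1:ℝ) ≤ (t * s) ^ q := Real.one_le_rpow hts1 hq0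
      rw [Real.mul_rpow (le_of_lt ht0) (le_of_lt hs0)] at this
      nlinarith [Real.rpow_pos_of_pos hs0 q]
    linarith
  · -- lower bound on [1, ∞)
    intro s hs
    have hs0 : (0:ℝ) < s := lt_of_lt_of_le one_pos hs
    set n := ⌊Real.logb σ s⌋₊ with hndef
    set t := σ ^ (n:ℝ) with htdef
    have ht0 : 0 < t := Real.rpow_pos_of_pos hσ0 _
    have hlogb0 : 0 ≤ Real.logb σ s := Real.logb_nonneg hσ1 hs
    have hts : t ≤ s := by
      have hfl : (n:ℝ) ≤ Real.logb σ s := Nat.floor_le hlogb0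
      have := Real.rpow_le_rpow_of_exponent_le (le_of_lt hσ1) hfl
      rwa [Real.rpow_logb hσ0 (ne_of_gt hσ1) hs0] at this
    have hsσt : s < σ * t := by
      have hfl : Real.logb σ s < (n:ℝ) + 1 := Nat.lt_floor_add_one _
      have := Real.rpow_lt_rpow_of_exponent_lt hσ1 hfl
      rw [Real.rpow_logb hσ0 (ne_of_gt hσ1) hs0, Real.rpow_add hσ0,
        Real.rpow_one, mul_comm] at this
      exact this
    set lam := s / t with hlamdef
    have hlam0 : 0 < lam := div_pos hs0 ht0
    have hlam1 : 1 ≤ lam := (one_le_div ht0).mpr hts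
    have hlamσ : lam ≤ σ := by
      rw [hlamdef, div_le_iff₀ ht0]
      linarith
    have htnat : t = σ ^ n := Real.rpow_natCast σ n
    have hiter := iter n lam hlam0
    rw [← htnat] at hiter
    have hst : t * lam = s := by
      rw [hlamdef]; field_simp
    rw [hst] at hiter
    have hflam : m ≤ f lam := hmin ⟨hlam1, hlamσ⟩
    have h2σn : (0:ℝ) < (2*σ)^n := pow_pos h2σpos n
    have hkey : (2*σ)^n * m ≤ f s :=
      le_trans (mul_le_mul_of_nonneg_left hflam (le_of_lt h2σn)) hiter
    rw [hpowq n, ← htdef] at hkey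
    -- t^q ≥ (s/σ)^q
    have hsσ : s / σ ≤ t := by
      rw [div_le_iff₀ hσ0]
      nlinarith
    have hsσ0 : 0 < s / σ := div_pos hs0 hσ0
    have htq : (s/σ) ^ q ≤ t ^ q := Real.rpow_le_rpow (le_of_lt hsσ0) hsσ hq0
    have hdiv : (s/σ)^q = s^q / σ^q := Real.div_rpow (le_of_lt hs0) (le_of_lt hσ0) q
    have hσqpos : 0 < σ ^ q := Real.rpow_pos_of_pos hσ0 _
    calc m / σ ^ q * s ^ q = m * (s^q / σ^q) := by ring
    _ = m * (s/σ)^q := by rw [hdiv]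
    _ ≤ m * t^q := mul_le_mul_of_nonneg_left htq (le_of_lt hmpos)
    _ = t^q * m := by ring
    _ ≤ f s := hkey
end

section
/- Let n ≥ 1 and let f : [0,∞) → ℝ be continuous with f(s) > 0 for all s > 0 and ∫₀¹ f(z)/z dz < ∞. Define f̃(s) = ∫₀^s f(z)/z dz, F(s) = ∫₀^s f(z) dz, and F̃(s) = ∫₀^s f̃(z) dz for s ≥ 0. Assume: (A) either n = 1, or there exists p with 1 < p < n(n+2)/(n−1)² such that f(s) ≤ p·f̃(s) for all s > 0; and (B) there exist c > 0 and real numbers m₁, m₂ with 2/3 < m₂ < m₁ < 2(n+2)/(3n+2) such that f(s) ≥ c s^{m₁} f̃(s)^{2m₁−1} for all s ∈ (0,1] and f(s) ≥ c s^{m₂} f̃(s)^{2m₂−1} for all s > 1. Then: (i) there exist c' > 0 and real numbers γ₁, γ₂ with 1 < γ₂ < γ₁ and (n ≤ 2 or γ₁ < (n+2)/(n−2)) such that f(s)·f̃(s) ≥ c' s^{2γ₂} for all s > 1 and, if n ≥ 2, f(s)·f̃(s) ≥ c' s^{2γ₁} for all s ∈ (0,1]; (ii) there exist c'' > 0 and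 real numbers d₁, d₂ with 1 < d₂ < d₁ < (n+2)/n such that f(s)·f̃(s) ≥ c'' (F(s) + F̃(s))^{d₁} for all s ∈ (0,1] and f(s)·f̃(s) ≥ c'' (F(s) + F̃(s))^{d₂} for all s > 1. -/
open Set Filter MeasureTheory

/-- `f̃(s) = ∫₀^s f(z)/z dz`. -/
noncomputable def fTilde (f : ℝ → ℝ) (s : ℝ) : ℝ :=
  ∫ z in Ioc (0 : ℝ) s, f z / z

/-- `F(s) = ∫₀^s f(z) dz`. -/
noncomputable def bigF (f : ℝ → ℝ) (s : ℝ) : ℝ :=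
  ∫ z in Ioc (0 : ℝ) s, f z

/-- `F̃(s) = ∫₀^s f̃(z) dz`. -/
noncomputable def bigFTilde (f : ℝ → ℝ) (s : ℝ) : ℝ :=
  ∫ z in Ioc (0 : ℝ) s, fTilde f z

/-!
Since `f̃' = f / s`, a lower bound `f ≥ c s^m f̃^(2m-1)` with `m < 1` is the differential
inequality `(f̃^(2-2m))' ≥ (2-2m) c s^(m-1)`. Integrating it from `0` (where `f̃ ≥ 0`) or from `1`
gives `f̃^(2-2m) ≥ C s^m`, and substituting back into `f f̃ ≥ c s^m f̃^(2m)` yields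
`f f̃ ≥ K s^(2m/(2-2m))` and `f f̃ ≥ K (s f̃)^(2m/(2-m))`. The exponents `m/(2-2m)` and
`2m/(2-m)` exceed `1` exactly when `m > 2/3`, and stay below `(n+2)/(n-2)`, resp. `(n+2)/n`,
exactly when `m < 2(n+2)/(3n+2)`; (ii) then follows from `F, F̃ ≤ s f̃`. For `s > 1` the exponent
`m₂` can first be lowered below `1`; for `s ≤ 1` and `m₁ ≥ 1` (only possible when `n = 1`) the
boundedness of `f̃` on `(0, 1]` suffices.
-/

open Topology

section rpow

variable {s T F c m : ℝ}

/-- Splits `T^(2m) = T^d (T^(2-2m))^q` with `q = (2m-d)/(2-2m)` and bounds the last factor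
by `hAT`. -/
lemma mul_rpow_le_of_rpow_le {A d : ℝ} (hs : 0 < s) (hT : 0 < T) (hc : 0 ≤ c) (hA : 0 ≤ A)
    (hm : m < 1) (hd : d ≤ 2 * m) (hF : c * s ^ m * T ^ (2 * m - 1) ≤ F)
    (hAT : A * s ^ m ≤ T ^ (2 - 2 * m)) :
    c * A ^ ((2 * m - d) / (2 - 2 * m)) * (s ^ (m * (2 - d) / (2 - 2 * m)) * T ^ d) ≤ F * T := by
  set q := (2 * m - d) / (2 - 2 * m)
  have hq : 0 ≤ q := div_nonneg (by linarith) (by linarith)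
  have hq_mul : (2 - 2 * m) * q = 2 * m - d := mul_div_cancel₀ _ (by linarith)
  clear_value q
  have hTq : A ^ q * s ^ (m * q) ≤ T ^ (2 * m - d) := by
    calc A ^ q * s ^ (m * q) = (A * s ^ m) ^ q := by
          rw [Real.mul_rpow hA (by positivity), Real.rpow_mul hs.le]
      _ ≤ (T ^ (2 - 2 * m)) ^ q := Real.rpow_le_rpow (by positivity) hAT hq
      _ = T ^ (2 * m - d) := by
          rw [← Real.rpow_mul hT.le, hq_mul]
  calc c * A ^ q * (s ^ (m * (2 - d) / (2 - 2 * m)) * T ^ d)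
      = c * s ^ m * T ^ d * (A ^ q * s ^ (m * q)) := by
        rw [show m * (2 - d) / (2 - 2 * m) = m + m * q by
          rw [div_eq_iff (by linarith)]; linear_combination -m * hq_mul, Real.rpow_add hs]
        ring
    _ ≤ c * s ^ m * T ^ d * T ^ (2 * m - d) := by gcongr
    _ = c * s ^ m * T ^ (2 * m - 1) * T := by
        rw [mul_assoc _ (T ^ d), ← Real.rpow_add hT, mul_assoc _ _ T, ← Real.rpow_add_one hT.ne']
        ring_nf
    _ ≤ F * T := by gcongr

lemma mul_rpow_le_of_le_one {T₁ d : ℝ} (hs : 0 < s) (hs1 : s ≤ 1) (hT : 0 < T) (hT₁ : T ≤ T₁)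
    (hc : 0 ≤ c) (hm : 0 ≤ m) (hd : 2 * m ≤ d) (hF : c * s ^ m * T ^ (2 * m - 1) ≤ F) :
    c * T₁ ^ (2 * m - d) * (s ^ d * T ^ d) ≤ F * T := by
  calc c * T₁ ^ (2 * m - d) * (s ^ d * T ^ d)
      ≤ c * T ^ (2 * m - d) * (s ^ m * T ^ d) := by
        gcongr ?_ * ?_ * (?_ * _)
        · exact Real.rpow_le_rpow_of_nonpos hT hT₁ (by linarith)
        · exact Real.rpow_le_rpow_of_exponent_ge hs hs1 (by linarith)
    _ = c * s ^ m * T ^ (2 * m - 1) * T := by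
        rw [mul_comm (s ^ m), ← mul_assoc, mul_assoc c, ← Real.rpow_add hT, mul_assoc _ _ T,
          ← Real.rpow_add_one hT.ne']
        ring_nf
    _ ≤ F * T := by gcongr

lemma exists_pos_forall_mul_le_and {S₁ S₂ : Set ℝ} {g₁ g₂ h : ℝ → ℝ}
    (hg₁ : ∀ s ∈ S₁, 0 ≤ g₁ s) (hg₂ : ∀ s ∈ S₂, 0 ≤ g₂ s)
    (h₁ : ∃ K, 0 < K ∧ ∀ s ∈ S₁, K * g₁ s ≤ h s) (h₂ : ∃ K, 0 < K ∧ ∀ s ∈ S₂, K * g₂ s ≤ h s) :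
    ∃ K, 0 < K ∧ (∀ s ∈ S₁, K * g₁ s ≤ h s) ∧ ∀ s ∈ S₂, K * g₂ s ≤ h s := by
  obtain ⟨K₁, hK₁, h₁⟩ := h₁
  obtain ⟨K₂, hK₂, h₂⟩ := h₂
  exact ⟨min K₁ K₂, lt_min hK₁ hK₂,
    fun s hs => (mul_le_mul_of_nonneg_right (min_le_left _ _) (hg₁ s hs)).trans (h₁ s hs),
    fun s hs => (mul_le_mul_of_nonneg_right (min_le_right _ _) (hg₂ s hs)).trans (h₂ s hs)⟩

end rpow

section

variable {f : ℝ → ℝ} {c m c₁ c₂ m₁ μ : ℝ} (hf_cont : ContinuousOn f (Ici 0))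
  (hf_pos : ∀ s : ℝ, 0 < s → 0 < f s)
  (hf_int : IntegrableOn (fun z : ℝ => f z / z) (Ioc (0 : ℝ) 1))

include hf_cont in
lemma continuousOn_div_Ioi : ContinuousOn (fun z : ℝ => f z / z) (Ioi 0) :=
  (hf_cont.mono Ioi_subset_Ici_self).div continuousOn_id fun _ hz => hz.ne'

include hf_cont hf_int in
lemma integrableOn_div_Ioc (s : ℝ) : IntegrableOn (fun z : ℝ => f z / z) (Ioc 0 s) := by
  rcases le_total s 1 with hs | hs
  · exact hf_int.mono_set (Ioc_subset_Ioc_right hs)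
  · rw [← Ioc_union_Ioc_eq_Ioc zero_le_one hs]
    refine hf_int.union ?_
    exact ((continuousOn_div_Ioi hf_cont).mono fun z hz => zero_lt_one.trans_le hz.1)
      |>.integrableOn_Icc.mono_set Ioc_subset_Icc_self

include hf_pos in
lemma fTilde_nonneg (s : ℝ) : 0 ≤ fTilde f s :=
  setIntegral_nonneg measurableSet_Ioc fun z hz => div_nonneg (hf_pos z hz.1).le hz.1.le

include hf_cont hf_pos hf_int in
lemma setIntegral_le_fTilde {t : Set ℝ} {b : ℝ} (ht : t ⊆ Ioc 0 b) :
    ∫ z in t, f z / z ≤ fTilde f b :=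
  setIntegral_mono_set (integrableOn_div_Ioc hf_cont hf_int b)
    ((ae_restrict_iff' measurableSet_Ioc).2 <|
      .of_forall fun z hz => div_nonneg (hf_pos z hz.1).le hz.1.le)
    ht.eventuallyLE

include hf_cont hf_pos hf_int in
lemma fTilde_mono : Monotone (fTilde f) := fun _ _ hab =>
  setIntegral_le_fTilde hf_cont hf_pos hf_int (Ioc_subset_Ioc_right hab)

include hf_cont hf_pos hf_int in
lemma fTilde_pos {s : ℝ} (hs : 0 < s) : 0 < fTilde f s := by
  have hs2 : 0 < s / 2 := half_pos hs
  have hpos : 0 < ∫ z in (s / 2)..s, f z / z := by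
    refine intervalIntegral.intervalIntegral_pos_of_pos_on ?_
      (fun z hz => div_pos (hf_pos z (hs2.trans hz.1)) (hs2.trans hz.1)) (by linarith)
    exact (intervalIntegrable_iff_integrableOn_Ioc_of_le (by linarith)).2
      ((integrableOn_div_Ioc hf_cont hf_int s).mono_set (Ioc_subset_Ioc_left hs2.le))
  rw [intervalIntegral.integral_of_le (by linarith)] at hpos
  exact hpos.trans_le (setIntegral_le_fTilde hf_cont hf_pos hf_int (Ioc_subset_Ioc_left hs2.le))

include hf_cont hf_int in
lemma hasDerivAt_fTilde {s : ℝ} (hs : 0 < s) : HasDerivAt (fTilde f) (f s / s) s := by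
  have hcont := continuousOn_div_Ioi hf_cont
  have hderiv : HasDerivAt (fun u => ∫ z in (0 : ℝ)..u, f z / z) (f s / s) s :=
    intervalIntegral.integral_hasDerivAt_right (f := fun z => f z / z)
      ((intervalIntegrable_iff_integrableOn_Ioc_of_le hs.le).2
        (integrableOn_div_Ioc hf_cont hf_int s))
      (hcont.stronglyMeasurableAtFilter isOpen_Ioi s hs) (hcont.continuousAt (Ioi_mem_nhds hs))
  refine hderiv.congr_of_eventuallyEq ?_
  filter_upwards [Ioi_mem_nhds hs] with u hu
  exact (intervalIntegral.integral_of_le (le_of_lt hu)).symm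

include hf_cont hf_pos hf_int in
/-- The lower bound `f ≥ c s^m f̃^(2m-1)` says `(f̃^(2-2m))' ≥ (2-2m) c s^(m-1)`. -/
lemma monotoneOn_fTilde_rpow_sub {S : Set ℝ} (hS : Convex ℝ S) (hS0 : S ⊆ Ioi 0)
    (hm0 : 0 < m) (hm1 : m ≤ 1)
    (hyp : ∀ s ∈ interior S, c * s ^ m * fTilde f s ^ (2 * m - 1) ≤ f s) :
    MonotoneOn (fun t => fTilde f t ^ (2 - 2 * m) - (2 - 2 * m) * c / m * t ^ m) S := by
  have hderiv : ∀ x ∈ S,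
      HasDerivAt (fun t => fTilde f t ^ (2 - 2 * m) - (2 - 2 * m) * c / m * t ^ m)
        (f x / x * (2 - 2 * m) * fTilde f x ^ (2 - 2 * m - 1)
          - (2 - 2 * m) * c / m * (m * x ^ (m - 1))) x :=
    fun x hx => ((hasDerivAt_fTilde hf_cont hf_int (hS0 hx)).rpow_const
      (.inl (fTilde_pos hf_cont hf_pos hf_int (hS0 hx)).ne')).sub
      ((Real.hasDerivAt_rpow_const (.inl (hS0 hx).ne')).const_mul _)
  refine monotoneOn_of_hasDerivWithinAt_nonneg hS
    (fun x hx => (hderiv x hx).continuousAt.continuousWithinAt)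
    (fun x hx => (hderiv x (interior_subset hx)).hasDerivWithinAt) fun x hx => ?_
  have hx₀ : 0 < x := hS0 (interior_subset hx)
  have hT : 0 < fTilde f x ^ (2 * m - 1) :=
    Real.rpow_pos_of_pos (fTilde_pos hf_cont hf_pos hf_int hx₀) _
  have hpow : fTilde f x ^ (2 - 2 * m - 1) = (fTilde f x ^ (2 * m - 1))⁻¹ := by
    rw [← Real.rpow_neg (fTilde_nonneg hf_pos x)]; ring_nf
  rw [hpow, Real.rpow_sub_one hx₀.ne', sub_nonneg]
  have := hyp x hx
  field_simp
  simpa only [mul_assoc] using mul_le_mul_of_nonneg_left this (sub_nonneg.2 hm1)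

include hf_cont hf_pos hf_int in
lemma exists_rpow_le_fTilde_rpow_of_mem_Ioc (hc : 0 < c) (hm0 : 0 < m) (hm1 : m < 1)
    (hyp : ∀ s ∈ Ioc (0 : ℝ) 1, c * s ^ m * fTilde f s ^ (2 * m - 1) ≤ f s) :
    ∃ C, 0 < C ∧ ∀ s ∈ Ioc (0 : ℝ) 1, C * s ^ m ≤ fTilde f s ^ (2 - 2 * m) := by
  have hmono := monotoneOn_fTilde_rpow_sub hf_cont hf_pos hf_int (c := c) (convex_Ioc 0 1)
    Ioc_subset_Ioi_self hm0 hm1.le fun x hx => hyp x (interior_subset hx)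
  set A := (2 - 2 * m) * c / m
  refine ⟨A, div_pos (mul_pos (by linarith) hc) hm0, fun s hs => ?_⟩
  -- compare with `t ∈ (0, s)` and let `t → 0`, using only `f̃(t) ≥ 0`
  have hlim : Tendsto (fun t : ℝ => -(A * t ^ m)) (𝓝[>] 0) (𝓝 0) := by
    have : Tendsto (fun t : ℝ => t ^ m) (𝓝[>] 0) (𝓝 (0 ^ m)) :=
      ((Real.continuous_rpow_const hm0.le).tendsto 0).mono_left nhdsWithin_le_nhds
    simpa [Real.zero_rpow hm0.ne'] using (this.const_mul A).neg
  have hle : ∀ᶠ t in 𝓝[>] 0, -(A * t ^ m) ≤ fTilde f s ^ (2 - 2 * m) - A * s ^ m := by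
    filter_upwards [Ioo_mem_nhdsGT hs.1] with t ht
    have hg := hmono ⟨ht.1, ht.2.le.trans hs.2⟩ hs ht.2.le
    linarith [Real.rpow_nonneg (fTilde_nonneg hf_pos t) (2 - 2 * m)]
  linarith [le_of_tendsto hlim hle]

include hf_cont hf_pos hf_int in
lemma exists_rpow_le_fTilde_rpow_of_mem_Ioi (hc : 0 < c) (hm0 : 0 < m) (hm1 : m < 1)
    (hyp : ∀ s ∈ Ioi (1 : ℝ), c * s ^ m * fTilde f s ^ (2 * m - 1) ≤ f s) :
    ∃ C, 0 < C ∧ ∀ s ∈ Ioi (1 : ℝ), C * s ^ m ≤ fTilde f s ^ (2 - 2 * m) := by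
  set A := (2 - 2 * m) * c / m
  set B := fTilde f 1 ^ (2 - 2 * m)
  have hA : 0 < A := div_pos (mul_pos (by linarith) hc) hm0
  have hB : 0 < B := Real.rpow_pos_of_pos (fTilde_pos hf_cont hf_pos hf_int one_pos) _
  have hmono := monotoneOn_fTilde_rpow_sub hf_cont hf_pos hf_int (c := c) (convex_Ici 1)
    (fun _ hx => mem_Ioi.2 (zero_lt_one.trans_le hx)) hm0 hm1.le (by rwa [interior_Ici])
  refine ⟨min A B, lt_min hA hB, fun s hs => ?_⟩
  have hgrowth : B - A ≤ fTilde f s ^ (2 - 2 * m) - A * s ^ m := by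
    simpa [A, B] using hmono self_mem_Ici (mem_Ici.2 hs.le) hs.le
  have hs1 : 1 ≤ s ^ m := Real.one_le_rpow hs.le hm0.le
  -- `f̃(s)^(2-2m) ≥ A (s^m - 1) + B ≥ min A B * (s^m - 1) + min A B`
  nlinarith [min_le_left A B, min_le_right A B]

include hf_cont hf_pos hf_int in
lemma bigF_le_mul_fTilde (s : ℝ) : bigF f s ≤ s * fTilde f s := by
  have hint : IntegrableOn f (Ioc 0 s) :=
    (hf_cont.mono Icc_subset_Ici_self).integrableOn_Icc.mono_set Ioc_subset_Icc_self
  calc bigF f s ≤ ∫ z in Ioc 0 s, s * (f z / z) :=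
        setIntegral_mono_on hint ((integrableOn_div_Ioc hf_cont hf_int s).const_mul s)
          measurableSet_Ioc fun z hz => by
            rw [mul_div_left_comm]
            exact le_mul_of_one_le_right (hf_pos z hz.1).le ((one_le_div hz.1).2 hz.2)
    _ = s * fTilde f s := integral_const_mul s _

include hf_cont hf_pos hf_int in
lemma bigFTilde_le_mul_fTilde {s : ℝ} (hs : 0 ≤ s) : bigFTilde f s ≤ s * fTilde f s := by
  have hmono := fTilde_mono hf_cont hf_pos hf_int
  calc bigFTilde f s ≤ ∫ _ in Ioc 0 s, fTilde f s :=
        setIntegral_mono_on ((hmono.monotoneOn _).integrableOn_isCompact isCompact_Icc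
          |>.mono_set Ioc_subset_Icc_self) (integrableOn_const (by simp)) measurableSet_Ioc
          fun z hz => hmono hz.2
    _ = s * fTilde f s := by
        rw [setIntegral_const, Real.volume_real_Ioc_of_le hs, sub_zero, smul_eq_mul]

include hf_pos in
lemma bigF_add_bigFTilde_nonneg (s : ℝ) : 0 ≤ bigF f s + bigFTilde f s :=
  add_nonneg (setIntegral_nonneg measurableSet_Ioc fun z hz => (hf_pos z hz.1).le)
    (setIntegral_nonneg measurableSet_Ioc fun z _ => fTilde_nonneg hf_pos z)

include hf_cont hf_pos hf_int in
lemma exists_bigF_add_bigFTilde_rpow_le {S : Set ℝ} {d : ℝ} (hS : S ⊆ Ioi 0) (hd : 0 ≤ d)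
    (h : ∃ K, 0 < K ∧ ∀ s ∈ S, K * (s * fTilde f s) ^ d ≤ f s * fTilde f s) :
    ∃ K, 0 < K ∧ ∀ s ∈ S, K * (bigF f s + bigFTilde f s) ^ d ≤ f s * fTilde f s := by
  obtain ⟨K, hK, h⟩ := h
  refine ⟨K / 2 ^ d, by positivity, fun s hs => ?_⟩
  have hs0 : 0 ≤ s := (hS hs).le
  have hsum : bigF f s + bigFTilde f s ≤ 2 * (s * fTilde f s) := by
    linarith [bigF_le_mul_fTilde hf_cont hf_pos hf_int s,
      bigFTilde_le_mul_fTilde hf_cont hf_pos hf_int hs0]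
  calc K / 2 ^ d * (bigF f s + bigFTilde f s) ^ d ≤ K / 2 ^ d * (2 * (s * fTilde f s)) ^ d := by
        gcongr
        exact bigF_add_bigFTilde_nonneg hf_pos s
    _ = K * (s * fTilde f s) ^ d := by
        rw [Real.mul_rpow zero_le_two (mul_nonneg hs0 (fTilde_nonneg hf_pos s))]
        field_simp
    _ ≤ f s * fTilde f s := h s hs

include hf_cont hf_pos hf_int in
lemma exists_rpow_le_mul_fTilde {S : Set ℝ} (hS : S ⊆ Ioi 0) (hc : 0 < c) (hm0 : 0 ≤ m)
    (hm : m < 1) (hyp : ∀ s ∈ S, c * s ^ m * fTilde f s ^ (2 * m - 1) ≤ f s)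
    (hcmp : ∃ C, 0 < C ∧ ∀ s ∈ S, C * s ^ m ≤ fTilde f s ^ (2 - 2 * m)) :
    ∃ K, 0 < K ∧ ∀ s ∈ S, K * s ^ (2 * (m / (2 - 2 * m))) ≤ f s * fTilde f s := by
  obtain ⟨C, hC, hcmp⟩ := hcmp
  refine ⟨c * C ^ ((2 * m - 0) / (2 - 2 * m)), by positivity, fun s hs => ?_⟩
  have := mul_rpow_le_of_rpow_le (d := 0) (hS hs) (fTilde_pos hf_cont hf_pos hf_int (hS hs)) hc.le
    hC.le hm (by linarith) (hyp s hs) (hcmp s hs)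
  rwa [Real.rpow_zero, mul_one, show m * (2 - 0) / (2 - 2 * m) = 2 * (m / (2 - 2 * m)) by ring]
    at this

include hf_cont hf_pos hf_int in
lemma exists_mul_rpow_le_mul_fTilde {S : Set ℝ} (hS : S ⊆ Ioi 0) (hc : 0 < c) (hm0 : 0 ≤ m)
    (hm : m < 1) (hyp : ∀ s ∈ S, c * s ^ m * fTilde f s ^ (2 * m - 1) ≤ f s)
    (hcmp : ∃ C, 0 < C ∧ ∀ s ∈ S, C * s ^ m ≤ fTilde f s ^ (2 - 2 * m)) :
    ∃ K, 0 < K ∧ ∀ s ∈ S, K * (s * fTilde f s) ^ (2 * m / (2 - m)) ≤ f s * fTilde f s := by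
  obtain ⟨C, hC, hcmp⟩ := hcmp
  have hd : 2 * m / (2 - m) ≤ 2 * m := div_le_self (by positivity) (by linarith)
  have hexp : m * (2 - 2 * m / (2 - m)) / (2 - 2 * m) = 2 * m / (2 - m) := by
    field_simp [show (2 : ℝ) - m ≠ 0 by linarith, show (1 : ℝ) - m ≠ 0 by linarith]; ring
  refine ⟨c * C ^ ((2 * m - 2 * m / (2 - m)) / (2 - 2 * m)), by positivity, fun s hs => ?_⟩
  have hT := fTilde_pos hf_cont hf_pos hf_int (hS hs)
  have := mul_rpow_le_of_rpow_le (hS hs) hT hc.le hC.le hm hd (hyp s hs) (hcmp s hs)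
  rwa [hexp, ← Real.mul_rpow (hS hs).le hT.le] at this

include hf_cont hf_pos hf_int in
lemma exists_mul_rpow_le_mul_fTilde_of_mem_Ioc (hc : 0 < c) (hm0 : 0 < m) (hm2 : m < 2)
    (hyp : ∀ s ∈ Ioc (0 : ℝ) 1, c * s ^ m * fTilde f s ^ (2 * m - 1) ≤ f s) :
    ∃ K, 0 < K ∧ ∀ s ∈ Ioc (0 : ℝ) 1,
      K * (s * fTilde f s) ^ (2 * m / (2 - m)) ≤ f s * fTilde f s := by
  rcases lt_or_ge m 1 with hm1 | hm1
  · exact exists_mul_rpow_le_mul_fTilde hf_cont hf_pos hf_int Ioc_subset_Ioi_self hc hm0.le hm1 hyp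
      (exists_rpow_le_fTilde_rpow_of_mem_Ioc hf_cont hf_pos hf_int hc hm0 hm1 hyp)
  · refine ⟨c * fTilde f 1 ^ (2 * m - 2 * m / (2 - m)),
      mul_pos hc (Real.rpow_pos_of_pos (fTilde_pos hf_cont hf_pos hf_int one_pos) _),
      fun s hs => ?_⟩
    rw [Real.mul_rpow hs.1.le (fTilde_nonneg hf_pos s)]
    exact mul_rpow_le_of_le_one hs.1 hs.2 (fTilde_pos hf_cont hf_pos hf_int hs.1)
      (fTilde_mono hf_cont hf_pos hf_int hs.2) hc.le hm0.le
      (le_div_self (by linarith) (by linarith) (by linarith)) (hyp s hs)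

include hf_cont hf_pos hf_int in
lemma exists_lower_bound_Ioi_of_exponent_le (hc : 0 < c) (hμ : μ ≤ m)
    (hyp : ∀ s ∈ Ioi (1 : ℝ), c * s ^ m * fTilde f s ^ (2 * m - 1) ≤ f s) :
    ∃ c', 0 < c' ∧ ∀ s ∈ Ioi (1 : ℝ), c' * s ^ μ * fTilde f s ^ (2 * μ - 1) ≤ f s := by
  have hT₁ := fTilde_pos hf_cont hf_pos hf_int one_pos
  refine ⟨c * fTilde f 1 ^ (2 * (m - μ)), mul_pos hc (Real.rpow_pos_of_pos hT₁ _), fun s hs => ?_⟩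
  have hs0 : 0 < s := zero_lt_one.trans hs
  have hT := fTilde_pos hf_cont hf_pos hf_int hs0
  have hT_le : fTilde f 1 ^ (2 * (m - μ)) ≤ fTilde f s ^ (2 * (m - μ)) :=
    Real.rpow_le_rpow hT₁.le (fTilde_mono hf_cont hf_pos hf_int (le_of_lt hs)) (by linarith)
  have hs_le : s ^ μ ≤ s ^ m := Real.rpow_le_rpow_of_exponent_le (le_of_lt hs) hμ
  calc c * fTilde f 1 ^ (2 * (m - μ)) * s ^ μ * fTilde f s ^ (2 * μ - 1)
      ≤ c * fTilde f s ^ (2 * (m - μ)) * s ^ m * fTilde f s ^ (2 * μ - 1) := by gcongr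
    _ = c * s ^ m * fTilde f s ^ (2 * m - 1) := by
        rw [show 2 * m - 1 = 2 * (m - μ) + (2 * μ - 1) by ring, Real.rpow_add hT]
        ring
    _ ≤ f s := hyp s hs

include hf_cont hf_pos hf_int in
lemma exists_rpow_le_mul_fTilde_of_lower_bounds {n : ℕ} (hc₁ : 0 < c₁) (hc₂ : 0 < c₂)
    (hμ : 2 / 3 < μ) (hμ1 : μ < 1) (hμm : μ < m₁)
    (hm₁ : m₁ < 2 * ((n : ℝ) + 2) / (3 * (n : ℝ) + 2))
    (hyp₁ : ∀ s ∈ Ioc (0 : ℝ) 1, c₁ * s ^ m₁ * fTilde f s ^ (2 * m₁ - 1) ≤ f s)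
    (hyp₂ : ∀ s ∈ Ioi (1 : ℝ), c₂ * s ^ μ * fTilde f s ^ (2 * μ - 1) ≤ f s) :
    ∃ c' : ℝ, 0 < c' ∧ ∃ γ₁ γ₂ : ℝ,
      1 < γ₂ ∧ γ₂ < γ₁ ∧ (n ≤ 2 ∨ γ₁ < ((n : ℝ) + 2) / ((n : ℝ) - 2)) ∧
      (∀ s : ℝ, 1 < s → c' * s ^ (2 * γ₂) ≤ f s * fTilde f s) ∧
      (2 ≤ n → ∀ s ∈ Ioc (0 : ℝ) 1, c' * s ^ (2 * γ₁) ≤ f s * fTilde f s) := by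
  have hIoi : Ioi (1 : ℝ) ⊆ Ioi 0 := Ioi_subset_Ioi zero_le_one
  have hlarge := exists_rpow_le_mul_fTilde hf_cont hf_pos hf_int hIoi hc₂ (by linarith) hμ1 hyp₂
    (exists_rpow_le_fTilde_rpow_of_mem_Ioi hf_cont hf_pos hf_int hc₂ (by linarith) hμ1 hyp₂)
  have hγ₂ : 1 < μ / (2 - 2 * μ) := by rw [lt_div_iff₀ (by linarith)]; linarith
  rcases lt_or_ge n 2 with hn | hn
  · obtain ⟨K, hK, h⟩ := hlarge
    exact ⟨K, hK, _ + 1, _, hγ₂, lt_add_one _, .inl hn.le, h, fun h2 => absurd h2 (not_le.2 hn)⟩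
  have hn' : (2 : ℝ) ≤ n := by exact_mod_cast hn
  have hm₁_key := (lt_div_iff₀ (by positivity)).1 hm₁
  have hm₁1 : m₁ < 1 := by nlinarith
  have hsmall := exists_rpow_le_mul_fTilde hf_cont hf_pos hf_int Ioc_subset_Ioi_self hc₁
    (by linarith) hm₁1 hyp₁
    (exists_rpow_le_fTilde_rpow_of_mem_Ioc hf_cont hf_pos hf_int hc₁ (by linarith) hm₁1 hyp₁)
  obtain ⟨K, hK, h₁, h₂⟩ := exists_pos_forall_mul_le_and (fun s hs => Real.rpow_nonneg hs.1.le _)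
    (fun s hs => Real.rpow_nonneg (hIoi hs).le _) hsmall hlarge
  refine ⟨K, hK, m₁ / (2 - 2 * m₁), μ / (2 - 2 * μ), hγ₂, ?_, ?_, h₂, fun _ => h₁⟩
  · rw [div_lt_div_iff₀ (by linarith) (by linarith)]; nlinarith
  · rcases le_or_gt n 2 with hn2 | hn2
    · exact .inl hn2
    · have hn3 : (2 : ℝ) < n := by exact_mod_cast hn2
      exact .inr (by rw [div_lt_div_iff₀ (by linarith) (by linarith)]; nlinarith)

include hf_cont hf_pos hf_int in
lemma exists_bigF_add_bigFTilde_rpow_le_of_lower_bounds {n : ℕ} (hn : 1 ≤ n) (hc₁ : 0 < c₁)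
    (hc₂ : 0 < c₂) (hμ : 2 / 3 < μ) (hμ1 : μ < 1) (hμm : μ < m₁)
    (hm₁ : m₁ < 2 * ((n : ℝ) + 2) / (3 * (n : ℝ) + 2))
    (hyp₁ : ∀ s ∈ Ioc (0 : ℝ) 1, c₁ * s ^ m₁ * fTilde f s ^ (2 * m₁ - 1) ≤ f s)
    (hyp₂ : ∀ s ∈ Ioi (1 : ℝ), c₂ * s ^ μ * fTilde f s ^ (2 * μ - 1) ≤ f s) :
    ∃ c'' : ℝ, 0 < c'' ∧ ∃ d₁ d₂ : ℝ,
      1 < d₂ ∧ d₂ < d₁ ∧ d₁ < ((n : ℝ) + 2) / (n : ℝ) ∧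
      (∀ s ∈ Ioc (0 : ℝ) 1, c'' * (bigF f s + bigFTilde f s) ^ d₁ ≤ f s * fTilde f s) ∧
      (∀ s : ℝ, 1 < s → c'' * (bigF f s + bigFTilde f s) ^ d₂ ≤ f s * fTilde f s) := by
  have hIoi : Ioi (1 : ℝ) ⊆ Ioi 0 := Ioi_subset_Ioi zero_le_one
  have hn' : (1 : ℝ) ≤ n := by exact_mod_cast hn
  have hm₁_key := (lt_div_iff₀ (by positivity)).1 hm₁
  have hm₁2 : m₁ < 2 := by nlinarith
  have hsmall := exists_bigF_add_bigFTilde_rpow_le hf_cont hf_pos hf_int Ioc_subset_Ioi_self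
    (div_nonneg (by linarith) (by linarith))
    (exists_mul_rpow_le_mul_fTilde_of_mem_Ioc hf_cont hf_pos hf_int hc₁ (by linarith) hm₁2 hyp₁)
  have hlarge := exists_bigF_add_bigFTilde_rpow_le hf_cont hf_pos hf_int hIoi
    (div_nonneg (by linarith) (by linarith))
    (exists_mul_rpow_le_mul_fTilde hf_cont hf_pos hf_int hIoi hc₂ (by linarith) hμ1 hyp₂
      (exists_rpow_le_fTilde_rpow_of_mem_Ioi hf_cont hf_pos hf_int hc₂ (by linarith) hμ1 hyp₂))
  obtain ⟨K, hK, h₁, h₂⟩ := exists_pos_forall_mul_le_and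
    (fun s _ => Real.rpow_nonneg (bigF_add_bigFTilde_nonneg hf_pos s) _)
    (fun s _ => Real.rpow_nonneg (bigF_add_bigFTilde_nonneg hf_pos s) _) hsmall hlarge
  refine ⟨K, hK, 2 * m₁ / (2 - m₁), 2 * μ / (2 - μ), ?_, ?_, ?_, h₁, h₂⟩
  · rw [lt_div_iff₀ (by linarith)]; linarith
  · rw [div_lt_div_iff₀ (by linarith) (by linarith)]; nlinarith
  · rw [div_lt_div_iff₀ (by linarith) (by linarith)]; nlinarith

end

theorem stmt_12_general (n : ℕ) (hn : 1 ≤ n) (f : ℝ → ℝ)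
    (hf_cont : ContinuousOn f (Ici 0)) (hf_pos : ∀ s : ℝ, 0 < s → 0 < f s)
    (hf_int : IntegrableOn (fun z : ℝ => f z / z) (Ioc (0 : ℝ) 1))
    (hB : ∃ c : ℝ, 0 < c ∧ ∃ m₁ m₂ : ℝ,
      2 / 3 < m₂ ∧ m₂ < m₁ ∧ m₁ < 2 * ((n : ℝ) + 2) / (3 * (n : ℝ) + 2) ∧
      (∀ s ∈ Ioc (0 : ℝ) 1, c * s ^ m₁ * fTilde f s ^ (2 * m₁ - 1) ≤ f s) ∧
      (∀ s : ℝ, 1 < s → c * s ^ m₂ * fTilde f s ^ (2 * m₂ - 1) ≤ f s)) :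
    (∃ c' : ℝ, 0 < c' ∧ ∃ γ₁ γ₂ : ℝ,
      1 < γ₂ ∧ γ₂ < γ₁ ∧ (n ≤ 2 ∨ γ₁ < ((n : ℝ) + 2) / ((n : ℝ) - 2)) ∧
      (∀ s : ℝ, 1 < s → c' * s ^ (2 * γ₂) ≤ f s * fTilde f s) ∧
      (2 ≤ n → ∀ s ∈ Ioc (0 : ℝ) 1, c' * s ^ (2 * γ₁) ≤ f s * fTilde f s)) ∧
    (∃ c'' : ℝ, 0 < c'' ∧ ∃ d₁ d₂ : ℝ,
      1 < d₂ ∧ d₂ < d₁ ∧ d₁ < ((n : ℝ) + 2) / (n : ℝ) ∧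
      (∀ s ∈ Ioc (0 : ℝ) 1, c'' * (bigF f s + bigFTilde f s) ^ d₁ ≤ f s * fTilde f s) ∧
      (∀ s : ℝ, 1 < s → c'' * (bigF f s + bigFTilde f s) ^ d₂ ≤ f s * fTilde f s)) := by
  obtain ⟨c, hc, m₁, m₂, hm₂, hm₂₁, hm₁, hyp₁, hyp₂⟩ := hB
  -- `m₂ ≥ 1` is possible when `n = 1`; any exponent in `(2/3, min m₂ 1)` serves for `s > 1`
  obtain ⟨c₂, hc₂, hyp₂'⟩ :=
    exists_lower_bound_Ioi_of_exponent_le hf_cont hf_pos hf_int hc (min_le_left m₂ (5 / 6)) hyp₂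
  have hμ : 2 / 3 < min m₂ (5 / 6) := lt_min hm₂ (by norm_num)
  have hμ1 : min m₂ (5 / 6) < 1 := (min_le_right _ _).trans_lt (by norm_num)
  have hμm : min m₂ (5 / 6) < m₁ := (min_le_left _ _).trans_lt hm₂₁
  exact ⟨exists_rpow_le_mul_fTilde_of_lower_bounds hf_cont hf_pos hf_int hc hc₂ hμ hμ1 hμm hm₁
      hyp₁ hyp₂',
    exists_bigF_add_bigFTilde_rpow_le_of_lower_bounds hf_cont hf_pos hf_int hn hc hc₂ hμ hμ1 hμm
      hm₁ hyp₁ hyp₂'⟩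

/-- growth properties of `f·f̃` under the hypotheses of the
parabolic Liouville theorem. -/
theorem stmt_12 (n : ℕ) (hn : 1 ≤ n) (f : ℝ → ℝ)
    (hf_cont : ContinuousOn f (Ici 0)) (hf_pos : ∀ s : ℝ, 0 < s → 0 < f s)
    (hf_int : IntegrableOn (fun z : ℝ => f z / z) (Ioc (0 : ℝ) 1))
    (hA : n = 1 ∨ ∃ p : ℝ, 1 < p ∧ p < ((n : ℝ) * ((n : ℝ) + 2)) / ((n : ℝ) - 1) ^ 2 ∧
      ∀ s : ℝ, 0 < s → f s ≤ p * fTilde f s)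
    (hB : ∃ c : ℝ, 0 < c ∧ ∃ m₁ m₂ : ℝ,
      2 / 3 < m₂ ∧ m₂ < m₁ ∧ m₁ < 2 * ((n : ℝ) + 2) / (3 * (n : ℝ) + 2) ∧
      (∀ s ∈ Ioc (0 : ℝ) 1, c * s ^ m₁ * fTilde f s ^ (2 * m₁ - 1) ≤ f s) ∧
      (∀ s : ℝ, 1 < s → c * s ^ m₂ * fTilde f s ^ (2 * m₂ - 1) ≤ f s)) :
    (∃ c' : ℝ, 0 < c' ∧ ∃ γ₁ γ₂ : ℝ,
      1 < γ₂ ∧ γ₂ < γ₁ ∧ (n ≤ 2 ∨ γ₁ < ((n : ℝ) + 2) / ((n : ℝ) - 2)) ∧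
      (∀ s : ℝ, 1 < s → c' * s ^ (2 * γ₂) ≤ f s * fTilde f s) ∧
      (2 ≤ n → ∀ s ∈ Ioc (0 : ℝ) 1, c' * s ^ (2 * γ₁) ≤ f s * fTilde f s)) ∧
    (∃ c'' : ℝ, 0 < c'' ∧ ∃ d₁ d₂ : ℝ,
      1 < d₂ ∧ d₂ < d₁ ∧ d₁ < ((n : ℝ) + 2) / (n : ℝ) ∧
      (∀ s ∈ Ioc (0 : ℝ) 1, c'' * (bigF f s + bigFTilde f s) ^ d₁ ≤ f s * fTilde f s) ∧
      (∀ s : ℝ, 1 < s → c'' * (bigF f s + bigFTilde f s) ^ d₂ ≤ f s * fTilde f s)) :=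
  stmt_12_general n hn f hf_cont hf_pos hf_int hB
end

section
/- Let P, p, q, K be real numbers with 1 < p < P and K ≥ 1, and assume one of the following: (a) q < P − p; (b) q = P − p and K > 1; (c) q > P − p and K > ((P−p)/q)·exp(q/(P−p) − 1). Then there exists m ∈ (p, P) such that the function s ↦ s^{p−m} (log(K+s))^q is nonincreasing on (0,∞). -/
open Set Filter Real Topology

lemma key_ineq (u t : ℝ) (ht : 0 < t) : u * t - Real.exp (u - 1) ≤ t * Real.log t := by
  have h := Real.add_one_le_exp (u - 1 - Real.log t)
  have h2 : Real.exp (u - 1 - Real.log t) = Real.exp (u - 1) / t := by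
    rw [Real.exp_sub, Real.exp_log ht]
  rw [h2] at h
  have h3 := mul_le_mul_of_nonneg_right h ht.le
  rw [div_mul_cancel₀ _ ht.ne'] at h3
  nlinarith

lemma exists_u (K u₀ : ℝ) (h : Real.exp (u₀ - 1) < K * u₀) :
    ∃ u', u₀ < u' ∧ Real.exp (u' - 1) ≤ K * u' := by
  have hc : ContinuousAt (fun v : ℝ => K * v - Real.exp (v - 1)) u₀ := by fun_prop
  have hpos : (0 : ℝ) < K * u₀ - Real.exp (u₀ - 1) := by linarith
  have hev : ∀ᶠ v in 𝓝 u₀, (0 : ℝ) < K * v - Real.exp (v - 1) := hc (Ioi_mem_nhds hpos)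
  have hev' : ∀ᶠ v in 𝓝[>] u₀, (0 : ℝ) < K * v - Real.exp (v - 1) :=
    hev.filter_mono nhdsWithin_le_nhds
  obtain ⟨v, hv1, hv2⟩ := (hev'.and self_mem_nhdsWithin).exists
  exact ⟨v, hv2, by linarith⟩

lemma exists_a (P p q K : ℝ) (hpP : p < P) (hK : 1 ≤ K)
    (hcase : q < P - p ∨
      (q = P - p ∧ 1 < K) ∨
      (q > P - p ∧ ((P - p) / q) * Real.exp (q / (P - p) - 1) < K)) :
    ∃ a, 0 < a ∧ a < P - p ∧
      ∀ s, 0 < s → q * s ≤ a * ((K + s) * Real.log (K + s)) := by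
  have hPp : 0 < P - p := by linarith
  rcases le_or_gt q 0 with hq | hq
  · refine ⟨(P - p) / 2, by linarith, by linarith, fun s hs => ?_⟩
    have h1 : (1 : ℝ) ≤ K + s := by linarith
    have hlog : 0 ≤ Real.log (K + s) := Real.log_nonneg h1
    have : 0 ≤ (P - p) / 2 * ((K + s) * Real.log (K + s)) := by positivity
    nlinarith
  · -- q > 0 : find u' with q/(P-p) < u' and exp (u'-1) ≤ K * u'
    have hu : ∃ u', q / (P - p) < u' ∧ Real.exp (u' - 1) ≤ K * u' := by
      rcases hcase with hc | ⟨hc, hKgt⟩ | ⟨hc, hKgt⟩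
      · exact ⟨1, by rw [div_lt_one hPp]; linarith, by simpa using hK⟩
      · have h1 : Real.exp ((1:ℝ) - 1) < K * 1 := by simpa using hKgt
        obtain ⟨u', hu1, hu2⟩ := exists_u K 1 h1
        exact ⟨u', by rw [hc, div_self hPp.ne']; exact hu1, hu2⟩
      · set u₀ := q / (P - p) with hu₀
        have hu₀pos : 0 < u₀ := div_pos (by linarith) hPp
        have hexp : Real.exp (u₀ - 1) < K * u₀ := by
          have := mul_lt_mul_of_pos_right hKgt hu₀pos
          have hinv : (P - p) / q * u₀ = 1 := by
            rw [hu₀, div_mul_div_comm, mul_comm q, div_self (mul_ne_zero hPp.ne' hq.ne')]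
          calc Real.exp (u₀ - 1) = (P - p) / q * Real.exp (u₀ - 1) * u₀ := by
                rw [mul_right_comm, hinv, one_mul]
            _ < K * u₀ := this
        obtain ⟨u', hu1, hu2⟩ := exists_u K u₀ hexp
        exact ⟨u', hu1, hu2⟩
    obtain ⟨u', hu1, hu2⟩ := hu
    have hu'pos : 0 < u' := lt_trans (div_pos hq hPp) hu1
    refine ⟨q / u', div_pos hq hu'pos, ?_, fun s hs => ?_⟩
    · rw [div_lt_iff₀ hu'pos]
      rw [div_lt_iff₀ hPp] at hu1
      linarith [hu1]
    · have ht : (0 : ℝ) < K + s := by linarith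
      have hkey := key_ineq u' (K + s) ht
      have : u' * s ≤ (K + s) * Real.log (K + s) := by nlinarith
      have hqu : q / u' * u' = q := div_mul_cancel₀ q hu'pos.ne'
      calc q * s = q / u' * (u' * s) := by rw [← mul_assoc, hqu]
        _ ≤ q / u' * ((K + s) * Real.log (K + s)) :=
            mul_le_mul_of_nonneg_left this (div_pos hq hu'pos).le

/-- for suitable `p, q, K`, the function
`s ↦ s^{p−m} (log(K+s))^q` is nonincreasing on `(0,∞)` for some `m ∈ (p, P)`. -/
theorem stmt_13 (P p q K : ℝ) (hp : 1 < p) (hpP : p < P) (hK : 1 ≤ K)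
    (hcase : q < P - p ∨
      (q = P - p ∧ 1 < K) ∨
      (q > P - p ∧ ((P - p) / q) * Real.exp (q / (P - p) - 1) < K)) :
    ∃ m ∈ Ioo p P,
      AntitoneOn (fun s : ℝ => s ^ (p - m) * Real.log (K + s) ^ q) (Ioi 0) := by
  obtain ⟨a, ha0, haP, hbound⟩ := exists_a P p q K hpP hK hcase
  refine ⟨p + a, ⟨by linarith, by linarith⟩, ?_⟩
  have heq : (fun s : ℝ => s ^ (p - (p + a)) * Real.log (K + s) ^ q)
      = fun s : ℝ => s ^ (-a) * Real.log (K + s) ^ q := by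
    funext s; rw [show p - (p + a) = -a by ring]
  rw [heq]
  -- derivative computation
  have hderiv : ∀ s ∈ Ioi (0:ℝ),
      HasDerivAt (fun s : ℝ => s ^ (-a) * Real.log (K + s) ^ q)
        ((-a * s ^ (-a - 1)) * Real.log (K + s) ^ q
          + s ^ (-a) * (1 / (K + s) * q * Real.log (K + s) ^ (q - 1))) s := by
    intro s hs
    have hs0 : (0:ℝ) < s := hs
    have hKs : (1:ℝ) < K + s := by linarith
    have hKs0 : (0:ℝ) < K + s := by linarith
    have hL : 0 < Real.log (K + s) := Real.log_pos hKs
    have h1 : HasDerivAt (fun s : ℝ => s ^ (-a)) (-a * s ^ (-a - 1)) s :=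
      Real.hasDerivAt_rpow_const (Or.inl hs0.ne')
    have h2 : HasDerivAt (fun s : ℝ => K + s) 1 s := (hasDerivAt_id s).const_add K
    have h3 : HasDerivAt (fun s : ℝ => Real.log (K + s)) (1 / (K + s)) s :=
      h2.log hKs0.ne'
    have h4 : HasDerivAt (fun s : ℝ => Real.log (K + s) ^ q)
        (1 / (K + s) * q * Real.log (K + s) ^ (q - 1)) s :=
      h3.rpow_const (Or.inl hL.ne')
    exact h1.mul h4
  apply antitoneOn_of_deriv_nonpos (convex_Ioi 0)
  · intro s hs
    exact ((hderiv s hs).continuousAt).continuousWithinAt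
  · rw [interior_Ioi]
    intro s hs
    exact (hderiv s hs).differentiableAt.differentiableWithinAt
  · rw [interior_Ioi]
    intro s hs
    rw [(hderiv s hs).deriv]
    have hs0 : (0:ℝ) < s := hs
    have hKs : (1:ℝ) < K + s := by linarith
    have hKs0 : (0:ℝ) < K + s := by linarith
    have hL : 0 < Real.log (K + s) := Real.log_pos hKs
    set L := Real.log (K + s) with hLdef
    have hA : (0:ℝ) < s ^ (-a - 1) := Real.rpow_pos_of_pos hs0 _
    have hB : (0:ℝ) < L ^ (q - 1) := Real.rpow_pos_of_pos hL _
    have hsa : s ^ (-a) = s ^ (-a - 1) * s := by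
      rw [← Real.rpow_add_one hs0.ne' (-a - 1)]; ring_nf
    have hLq : L ^ q = L ^ (q - 1) * L := by
      rw [← Real.rpow_add_one hL.ne' (q - 1)]; ring_nf
    have hkey := hbound s hs0
    have hdiv : q * s / (K + s) - a * L ≤ 0 := by
      rw [sub_nonpos, div_le_iff₀ hKs0]
      nlinarith
    have hrw : (-a * s ^ (-a - 1)) * L ^ q
        + s ^ (-a) * (1 / (K + s) * q * L ^ (q - 1))
        = s ^ (-a - 1) * L ^ (q - 1) * (q * s / (K + s) - a * L) := by
      rw [hsa, hLq]; field_simp; ring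
    rw [hrw]
    exact mul_nonpos_of_nonneg_of_nonpos (by positivity) hdiv
end

section
/- Let p > 1 and a ∈ (0, p−1), and define f : (0,∞) → (0,∞) by f(s) = s^{p + a·sin(log(log(3 + s + s⁻¹)))}. Then f has controled variation: for every compact subset 𝒦 of (0,∞), inf{ f(λs)/f(λ) : λ > 0, s ∈ 𝒦 } > 0. -/
open Set Filter

private lemma sin_lip (x y : ℝ) : |Real.sin x - Real.sin y| ≤ |x - y| := by
  rw [Real.sin_sub_sin]
  calc |2 * Real.sin ((x - y) / 2) * Real.cos ((x + y) / 2)|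
      = 2 * |Real.sin ((x - y) / 2)| * |Real.cos ((x + y) / 2)| := by
        rw [abs_mul, abs_mul]; norm_num
    _ ≤ 2 * |(x - y) / 2| * 1 := by
        apply mul_le_mul (by nlinarith [Real.abs_sin_le_abs (x := (x-y)/2)])
          (Real.abs_cos_le_one _) (abs_nonneg _) (by positivity)
    _ = |x - y| := by rw [abs_div]; norm_num; ring

private lemma two_le_add_inv (z : ℝ) (hz : 0 < z) : 2 ≤ z + z⁻¹ := by
  have h1 : z * z⁻¹ = 1 := mul_inv_cancel₀ hz.ne'
  nlinarith [sq_nonneg (z - 1)]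

private lemma log_sub_log_le (b c : ℝ) (hc : 0 < c) (h : c ≤ b) :
    Real.log b - Real.log c ≤ (b - c) / c := by
  have hb : 0 < b := lt_of_lt_of_le hc h
  have h2 := Real.log_le_sub_one_of_pos (show 0 < b / c by positivity)
  rw [Real.log_div hb.ne' hc.ne'] at h2
  have : b / c - 1 = (b - c) / c := by field_simp
  linarith

private lemma hum_lemma (T u m : ℝ) (hT : 0 < T) (hm1 : 1 ≤ m)
    (hmu : u - T ≤ m) : u ≤ (2 * T + 2) * m := by
  rcases le_total u (2 * T + 2) with h | h
  · calc u ≤ 2 * T + 2 := h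
      _ ≤ (2 * T + 2) * m := le_mul_of_one_le_right (by linarith) hm1
  · nlinarith [mul_nonneg hT.le (by linarith : (0:ℝ) ≤ u - T - 1),
      mul_le_mul_of_nonneg_left hmu (by linarith : (0:ℝ) ≤ 2 * T + 2)]

set_option maxHeartbeats 1000000 in
/-- the strongly oscillating function
`f(s) = s^{p + a sin(log log(3 + s + s⁻¹))}` has controled variation. -/
theorem stmt_15 (p a : ℝ) (hp : 1 < p) (ha : a ∈ Ioo (0 : ℝ) (p - 1)) :
    ∀ K : Set ℝ, IsCompact K → K ⊆ Ioi 0 →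
      ∃ c : ℝ, 0 < c ∧ ∀ lam : ℝ, 0 < lam → ∀ s ∈ K,
        c ≤ (lam * s) ^ (p + a * Real.sin (Real.log (Real.log (3 + lam * s + (lam * s)⁻¹))))
            / lam ^ (p + a * Real.sin (Real.log (Real.log (3 + lam + lam⁻¹)))) := by
  intro K hK hK0
  have ha0 : 0 < a := ha.1
  -- uniform bound on |log s| over K
  obtain ⟨T0, hT0⟩ : ∃ T0 : ℝ, ∀ s ∈ K, |Real.log s| ≤ T0 := by
    obtain ⟨T0, h⟩ := hK.exists_bound_of_continuousOn
      (Real.continuousOn_log.mono (fun x hx => by simpa using (hK0 hx).ne'))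
    exact ⟨T0, fun s hs => by simpa using h s hs⟩
  set T : ℝ := |T0| + 1 with hTdef
  have hT : 0 < T := by positivity
  have hTs : ∀ s ∈ K, |Real.log s| ≤ T := fun s hs =>
    (hT0 s hs).trans (by simpa [hTdef] using le_add_of_le_of_nonneg (le_abs_self T0) zero_le_one)
  refine ⟨Real.exp (-((p + a) * T + a * T * (2 * T + 2))), Real.exp_pos _, ?_⟩
  intro lam hlam s hs
  have hs0 : 0 < s := hK0 hs
  have hx : 0 < lam * s := mul_pos hlam hs0
  set x : ℝ := lam * s with hxdef
  -- basic facts about L z = log (3 + z + z⁻¹)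
  have hL5 : ∀ z : ℝ, 0 < z → Real.log 5 ≤ Real.log (3 + z + z⁻¹) := fun z hz => by
    have := two_le_add_inv z hz
    exact Real.log_le_log (by norm_num) (by linarith)
  have hlog5 : (1 : ℝ) < Real.log 5 := by
    have h : Real.exp 1 < 5 := lt_trans Real.exp_one_lt_d9 (by norm_num)
    calc (1:ℝ) = Real.log (Real.exp 1) := (Real.log_exp 1).symm
      _ < Real.log 5 := Real.log_lt_log (Real.exp_pos 1) h
  set Lx : ℝ := Real.log (3 + x + x⁻¹) with hLxdef
  set Ly : ℝ := Real.log (3 + lam + lam⁻¹) with hLydef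
  have hLx1 : 1 ≤ Lx := le_of_lt (lt_of_lt_of_le hlog5 (hL5 x hx))
  have hLy1 : 1 ≤ Ly := le_of_lt (lt_of_lt_of_le hlog5 (hL5 lam hlam))
  have hposx : (0:ℝ) < 3 + x + x⁻¹ := by positivity
  have hposy : (0:ℝ) < 3 + lam + lam⁻¹ := by positivity
  -- |Lx - Ly| ≤ |log s|
  set M : ℝ := max s s⁻¹ with hMdef
  have hMs : s ≤ M := le_max_left _ _
  have hMsi : s⁻¹ ≤ M := le_max_right _ _
  have hM1 : 1 ≤ M := by
    rcases le_total 1 s with h | h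
    · exact le_trans h hMs
    · exact le_trans ((one_le_inv₀ hs0).mpr h) hMsi
  have hM0 : 0 < M := lt_of_lt_of_le one_pos hM1
  have hlogM : Real.log M = |Real.log s| := by
    rcases le_total 1 s with h | h
    · have : M = s := max_eq_left (by
        calc s⁻¹ ≤ 1 := inv_le_one_of_one_le₀ h
          _ ≤ s := h)
      rw [this, abs_of_nonneg (Real.log_nonneg h)]
    · have : M = s⁻¹ := max_eq_right (by
        calc s ≤ 1 := h
          _ ≤ s⁻¹ := (one_le_inv₀ hs0).mpr h)
      rw [this, Real.log_inv, abs_of_nonpos (Real.log_nonpos hs0.le h)]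
  have hss : s * s⁻¹ = 1 := mul_inv_cancel₀ hs0.ne'
  have hxinv : x⁻¹ = lam⁻¹ * s⁻¹ := by rw [hxdef, mul_inv]
  have hli : 0 < lam⁻¹ := inv_pos.mpr hlam
  have hsi : 0 < s⁻¹ := inv_pos.mpr hs0
  have ineq1 : 3 + x + x⁻¹ ≤ M * (3 + lam + lam⁻¹) := by
    rw [hxinv, hxdef]
    nlinarith [mul_le_mul_of_nonneg_left hMs hlam.le,
      mul_le_mul_of_nonneg_left hMsi hli.le]
  have ineq2 : 3 + lam + lam⁻¹ ≤ M * (3 + x + x⁻¹) := by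
    rw [hxinv, hxdef]
    nlinarith [mul_le_mul_of_nonneg_left hMsi (mul_pos hlam hs0).le,
      mul_le_mul_of_nonneg_left hMs (mul_pos hli hsi).le]
  have hLdiff : |Lx - Ly| ≤ T := by
    have h1 : Lx - Ly ≤ Real.log M := by
      have := Real.log_le_log hposx ineq1
      rw [Real.log_mul hM0.ne' hposy.ne', ← hLxdef, ← hLydef] at this
      linarith
    have h2 : Ly - Lx ≤ Real.log M := by
      have := Real.log_le_log hposy ineq2
      rw [Real.log_mul hM0.ne' hposx.ne', ← hLxdef, ← hLydef] at this
      linarith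
    have := hTs s hs
    rw [← hlogM] at this
    rw [abs_sub_le_iff]
    constructor <;> linarith
  -- Ly ≥ |log lam|
  have hLyabs : |Real.log lam| ≤ Ly := by
    rw [abs_le]
    constructor
    · rw [neg_le, ← Real.log_inv]
      exact Real.log_le_log hli (by linarith)
    · exact Real.log_le_log hlam (by linarith)
  set m : ℝ := min Lx Ly with hmdef
  have hm1 : 1 ≤ m := le_min hLx1 hLy1
  have hm0 : 0 < m := lt_of_lt_of_le one_pos hm1
  have hmu : |Real.log lam| - T ≤ m := by
    have h1 : |Real.log lam| - T ≤ Ly := by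
      have := hLdiff; linarith [abs_nonneg (Lx - Ly)]
    have h2 : |Real.log lam| - T ≤ Lx := by
      have := abs_le.mp hLdiff; linarith
    exact le_min h2 h1
  -- |log Lx - log Ly| ≤ T / m
  have hlogL : |Real.log Lx - Real.log Ly| ≤ T / m := by
    have habs := abs_le.mp hLdiff
    rcases le_total Lx Ly with h | h
    · have hmeq : m = Lx := min_eq_left h
      have hkey := log_sub_log_le Ly Lx (by linarith) h
      have hmono : Real.log Lx ≤ Real.log Ly := Real.log_le_log (by linarith) h
      rw [abs_sub_comm, abs_of_nonneg (by linarith), hmeq]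
      calc Real.log Ly - Real.log Lx ≤ (Ly - Lx) / Lx := hkey
        _ ≤ T / Lx := by gcongr; linarith
    · have hmeq : m = Ly := min_eq_right h
      have hkey := log_sub_log_le Lx Ly (by linarith) h
      have hmono : Real.log Ly ≤ Real.log Lx := Real.log_le_log (by linarith) h
      rw [abs_of_nonneg (by linarith), hmeq]
      calc Real.log Lx - Real.log Ly ≤ (Lx - Ly) / Ly := hkey
        _ ≤ T / Ly := by gcongr; linarith
  -- u ≤ (2T+2) m
  set u : ℝ := |Real.log lam| with hudef
  have hu0 : 0 ≤ u := abs_nonneg _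
  have hum : u ≤ (2 * T + 2) * m := hum_lemma T u m hT hm1 hmu
  -- exponents
  set Ex : ℝ := p + a * Real.sin (Real.log Lx) with hExdef
  set Ey : ℝ := p + a * Real.sin (Real.log Ly) with hEydef
  have hExbd : |Ex| ≤ p + a := by
    rw [hExdef]
    calc |p + a * Real.sin (Real.log Lx)| ≤ |p| + |a * Real.sin (Real.log Lx)| := abs_add_le _ _
      _ ≤ p + a := by
          rw [abs_of_pos (by linarith : (0:ℝ) < p), abs_mul, abs_of_pos ha0]
          nlinarith [Real.abs_sin_le_one (Real.log Lx)]
  have hEdiff : |Ex - Ey| * u ≤ a * T * (2 * T + 2) := by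
    have h1 : |Ex - Ey| ≤ a * (T / m) := by
      have : Ex - Ey = a * (Real.sin (Real.log Lx) - Real.sin (Real.log Ly)) := by
        rw [hExdef, hEydef]; ring
      rw [this, abs_mul, abs_of_pos ha0]
      exact mul_le_mul_of_nonneg_left
        ((sin_lip _ _).trans hlogL) ha0.le
    calc |Ex - Ey| * u ≤ (a * (T / m)) * u := mul_le_mul_of_nonneg_right h1 hu0
      _ ≤ a * T * (2 * T + 2) := by
          have hdiv : u / m ≤ 2 * T + 2 := (div_le_iff₀ hm0).mpr (by linarith)
          have hstep := mul_le_mul_of_nonneg_left hdiv (show (0:ℝ) ≤ a * T by positivity)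
          calc a * (T / m) * u = a * T * (u / m) := by ring
            _ ≤ a * T * (2 * T + 2) := hstep
  -- main exponent bound
  have hlogx : Real.log x = Real.log lam + Real.log s := Real.log_mul hlam.ne' hs0.ne'
  have hexp : -((p + a) * T + a * T * (2 * T + 2)) ≤ Ex * Real.log x - Ey * Real.log lam := by
    have heq : Ex * Real.log x - Ey * Real.log lam
        = Ex * Real.log s + (Ex - Ey) * Real.log lam := by
      rw [hlogx]; ring
    have h1 : |Ex * Real.log s| ≤ (p + a) * T :=
      (abs_mul _ _).le.trans (mul_le_mul hExbd (hTs s hs) (abs_nonneg _) (by linarith))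
    have h2 : |(Ex - Ey) * Real.log lam| ≤ a * T * (2 * T + 2) := by
      rw [abs_mul]; exact hEdiff
    have := neg_abs_le (Ex * Real.log s)
    have := neg_abs_le ((Ex - Ey) * Real.log lam)
    rw [heq]; linarith
  -- finish
  rw [Real.rpow_def_of_pos hx, Real.rpow_def_of_pos hlam, ← Real.exp_sub]
  exact Real.exp_le_exp.mpr (by
    rw [mul_comm (Real.log x) Ex, mul_comm (Real.log lam) Ey]
    exact hexp)
end

section
/- Let ℓ, m, p, P be real numbers with 1 < ℓ < m < p < P. Then there exists a continuous function f : [0,∞) → ℝ with f(0) = 0 and f(s) > 0 for all s > 0, such that s ↦ s^{−P} f(s) is nonincreasing on (0,∞), s ↦ s^{−ℓ} f(s) is nondecreasing on (0,∞), and there exist sequences (sᵢ) and (tᵢ) tending to ∞ with f(sᵢ) = sᵢ^p and f(tᵢ) = tᵢ^m for all i. -/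
/-!
Work in logarithmic coordinates: for `g : ℝ → ℝ` put `f s = exp (g (log s))`. Then
`f s / s ^ c = exp (g x - c x)` with `x = log s`, so the two monotonicity conditions say that
`ℓ ≤ g' ≤ P`, and `f s = s ^ r` says `g x = r x`. Take
`g x = (q + A sin (θ log (1 + x ^ 2))) x` with `q ± A = p, m`: its slope oscillates between
`m` and `p`, and the phase grows so slowly that `g'` stays within `2Aθ` of that slope, which is
at most `min (m - ℓ) (P - p)` for small `θ`. The lower bound `g' ≥ ℓ > 0` also forces
`f s ≤ f 1 s ^ ℓ` on `(0, 1]`, which gives continuity at `0`.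
-/

open Set Filter Real

noncomputable section

def expCompLog (g : ℝ → ℝ) (s : ℝ) : ℝ := if 0 < s then exp (g (log s)) else 0

section expCompLog

variable {g : ℝ → ℝ} {s c : ℝ}

@[simp]
lemma expCompLog_zero (g : ℝ → ℝ) : expCompLog g 0 = 0 := if_neg (lt_irrefl 0)

lemma expCompLog_of_pos (hs : 0 < s) : expCompLog g s = exp (g (log s)) := if_pos hs

lemma expCompLog_pos (hs : 0 < s) : 0 < expCompLog g s := by
  rw [expCompLog_of_pos hs]
  exact exp_pos _

lemma expCompLog_nonneg (g : ℝ → ℝ) (s : ℝ) : 0 ≤ expCompLog g s := by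
  unfold expCompLog
  split_ifs
  exacts [(exp_pos _).le, le_rfl]

lemma expCompLog_exp_eq_rpow {x r : ℝ} (h : g x = r * x) : expCompLog g (exp x) = exp x ^ r := by
  rw [expCompLog_of_pos (exp_pos x), log_exp, h, rpow_def_of_pos (exp_pos x), log_exp, mul_comm]

lemma expCompLog_div_rpow (hs : 0 < s) (c : ℝ) :
    expCompLog g s / s ^ c = exp (g (log s) - c * log s) := by
  rw [expCompLog_of_pos hs, rpow_def_of_pos hs, ← exp_sub, mul_comm c]

lemma monotoneOn_expCompLog_div_rpow (h : Monotone fun x => g x - c * x) :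
    MonotoneOn (fun s => expCompLog g s / s ^ c) (Ioi 0) := by
  intro s hs t ht hst
  simp only [expCompLog_div_rpow hs, expCompLog_div_rpow ht]
  exact exp_le_exp.mpr (h (log_le_log hs hst))

lemma antitoneOn_expCompLog_div_rpow (h : Antitone fun x => g x - c * x) :
    AntitoneOn (fun s => expCompLog g s / s ^ c) (Ioi 0) := by
  intro s hs t ht hst
  simp only [expCompLog_div_rpow hs, expCompLog_div_rpow ht]
  exact exp_le_exp.mpr (h (log_le_log hs hst))

lemma expCompLog_le_mul_rpow (hc : 0 < c) (h : Monotone fun x => g x - c * x)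
    (hs0 : 0 ≤ s) (hs1 : s ≤ 1) : expCompLog g s ≤ exp (g 0) * s ^ c := by
  rcases hs0.eq_or_lt with rfl | hs
  · simp [zero_rpow hc.ne']
  have hquot := monotoneOn_expCompLog_div_rpow h hs (mem_Ioi.mpr one_pos) hs1
  simp only [expCompLog_of_pos one_pos, log_one, one_rpow, div_one] at hquot
  rwa [div_le_iff₀ (rpow_pos_of_pos hs c)] at hquot

lemma continuousOn_expCompLog (hg : Continuous g) (hc : 0 < c)
    (h : Monotone fun x => g x - c * x) : ContinuousOn (expCompLog g) (Ici 0) := by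
  intro s hs
  rcases (mem_Ici.mp hs).eq_or_lt with rfl | hs
  · have hbound : Tendsto (fun s => exp (g 0) * s ^ c) (nhdsWithin 0 (Ici 0)) (nhds 0) := by
      have := (continuousAt_rpow_const 0 c (Or.inr hc.le)).tendsto.const_mul (exp (g 0))
      simpa [zero_rpow hc.ne'] using this.mono_left nhdsWithin_le_nhds
    have hle : ∀ᶠ s in nhdsWithin 0 (Ici 0), expCompLog g s ≤ exp (g 0) * s ^ c := by
      filter_upwards [self_mem_nhdsWithin,
        eventually_nhdsWithin_of_eventually_nhds (eventually_le_nhds one_pos)] with s hs0 hs1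
      exact expCompLog_le_mul_rpow hc h hs0 hs1
    rw [ContinuousWithinAt, expCompLog_zero]
    exact squeeze_zero' (.of_forall (expCompLog_nonneg g)) hle hbound
  · refine ContinuousAt.continuousWithinAt ?_
    have hcomp : ContinuousAt (fun s => exp (g (log s))) s :=
      continuous_exp.continuousAt.comp (hg.continuousAt.comp (continuousAt_log hs.ne'))
    refine hcomp.congr ?_
    filter_upwards [eventually_gt_nhds hs] with t ht
    exact (expCompLog_of_pos ht).symm

end expCompLog

def oscillating (q A θ x : ℝ) : ℝ := (q + A * sin (θ * log (1 + x ^ 2))) * x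

def oscillatingDeriv (q A θ x : ℝ) : ℝ :=
  q + A * sin (θ * log (1 + x ^ 2)) + 2 * A * θ * cos (θ * log (1 + x ^ 2)) * (x ^ 2 / (1 + x ^ 2))

section oscillating

variable {q A θ c : ℝ}

lemma hasDerivAt_oscillating (q A θ x : ℝ) :
    HasDerivAt (oscillating q A θ) (oscillatingDeriv q A θ x) x := by
  have hpos : 0 < 1 + x ^ 2 := by positivity
  have hphase := (((hasDerivAt_pow 2 x).const_add 1).log hpos.ne').const_mul θ
  have := ((hphase.sin.const_mul A).const_add q).mul (hasDerivAt_id x)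
  refine this.congr_deriv ?_
  simp only [oscillatingDeriv, id]
  field_simp
  ring

lemma continuous_oscillating (q A θ : ℝ) : Continuous (oscillating q A θ) :=
  continuous_iff_continuousAt.mpr fun x => (hasDerivAt_oscillating q A θ x).continuousAt

lemma abs_oscillatingDeriv_sub_le (hA : 0 ≤ A) (hθ : 0 ≤ θ) (x : ℝ) :
    |oscillatingDeriv q A θ x - q| ≤ A * (1 + 2 * θ) := by
  set u := θ * log (1 + x ^ 2)
  have hratio : |x ^ 2 / (1 + x ^ 2)| ≤ 1 := by
    rw [abs_of_nonneg (by positivity), div_le_one (by positivity)]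
    linarith
  calc |oscillatingDeriv q A θ x - q|
      = |A * sin u + 2 * A * θ * cos u * (x ^ 2 / (1 + x ^ 2))| := by
        simp only [oscillatingDeriv, u]; ring_nf
    _ ≤ |A * sin u| + |2 * A * θ * cos u * (x ^ 2 / (1 + x ^ 2))| := abs_add_le _ _
    _ = A * |sin u| + 2 * A * θ * (|cos u| * |x ^ 2 / (1 + x ^ 2)|) := by
        simp only [abs_mul, abs_of_nonneg hA, abs_of_nonneg hθ, abs_two]
        ring
    _ ≤ A * 1 + 2 * A * θ * (1 * 1) := by
        gcongr
        exacts [abs_sin_le_one u, abs_cos_le_one u]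
    _ = A * (1 + 2 * θ) := by ring

lemma monotone_oscillating_sub_mul (hA : 0 ≤ A) (hθ : 0 ≤ θ) (hc : c ≤ q - A * (1 + 2 * θ)) :
    Monotone fun x => oscillating q A θ x - c * x :=
  monotone_of_hasDerivAt_nonneg
    (fun x => (hasDerivAt_oscillating q A θ x).sub (hasDerivAt_const_mul c))
    fun x => by
      rw [Pi.zero_apply]
      have := (abs_le.mp (abs_oscillatingDeriv_sub_le (q := q) hA hθ x)).1
      linarith

lemma antitone_oscillating_sub_mul (hA : 0 ≤ A) (hθ : 0 ≤ θ) (hc : q + A * (1 + 2 * θ) ≤ c) :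
    Antitone fun x => oscillating q A θ x - c * x :=
  antitone_of_hasDerivAt_nonpos
    (fun x => (hasDerivAt_oscillating q A θ x).sub (hasDerivAt_const_mul c))
    fun x => by
      rw [Pi.zero_apply]
      have := (abs_le.mp (abs_oscillatingDeriv_sub_le (q := q) hA hθ x)).2
      linarith

lemma exists_tendsto_oscillating_eq_mul (hθ : 0 < θ) (hc : 0 ≤ c) :
    ∃ X : ℕ → ℝ, Tendsto X atTop atTop ∧ ∀ i, oscillating q A θ (X i) = (q + A * sin c) * X i := by
  have hphase : ∀ d, 0 ≤ d → θ * log (1 + √(exp (d / θ) - 1) ^ 2) = d := by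
    intro d hd
    have : 1 ≤ exp (d / θ) := one_le_exp (div_nonneg hd hθ.le)
    rw [sq_sqrt (by linarith), add_sub_cancel, log_exp, mul_div_cancel₀ _ hθ.ne']
  have hnodes : Tendsto (fun i : ℕ => c + i * (2 * π)) atTop atTop :=
    tendsto_atTop_add_const_left _ c (tendsto_natCast_atTop_atTop.atTop_mul_const two_pi_pos)
  refine ⟨fun i => √(exp ((c + i * (2 * π)) / θ) - 1), ?_, fun i => ?_⟩
  · exact tendsto_sqrt_atTop.comp <| tendsto_atTop_add_const_right _ (-1) <|
      tendsto_exp_atTop.comp (hnodes.atTop_div_const hθ)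
  · rw [oscillating, hphase _ (by positivity), sin_add_nat_mul_two_pi]

lemma exists_tendsto_expCompLog_oscillating_eq_rpow (hθ : 0 < θ) (hc : 0 ≤ c) :
    ∃ S : ℕ → ℝ, Tendsto S atTop atTop ∧
      ∀ i, expCompLog (oscillating q A θ) (S i) = S i ^ (q + A * sin c) :=
  let ⟨X, hX, hXval⟩ := exists_tendsto_oscillating_eq_mul (q := q) (A := A) hθ hc
  ⟨fun i => exp (X i), tendsto_exp_atTop.comp hX, fun i => expCompLog_exp_eq_rpow (hXval i)⟩

end oscillating

end

/-- existence of a strongly oscillating nonlinearity between the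
powers `s^m` and `s^p`, with `s^{-P} f(s)` nonincreasing and `s^{-ℓ} f(s)`
nondecreasing. -/
theorem stmt_16 (ℓ m p P : ℝ) (h1 : 1 < ℓ) (h2 : ℓ < m) (h3 : m < p) (h4 : p < P) :
    ∃ f : ℝ → ℝ,
      ContinuousOn f (Ici 0) ∧ f 0 = 0 ∧ (∀ s : ℝ, 0 < s → 0 < f s) ∧
      AntitoneOn (fun s : ℝ => f s / s ^ P) (Ioi 0) ∧
      MonotoneOn (fun s : ℝ => f s / s ^ ℓ) (Ioi 0) ∧
      ∃ S T : ℕ → ℝ, Tendsto S atTop atTop ∧ Tendsto T atTop atTop ∧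
        (∀ i, f (S i) = S i ^ p) ∧ (∀ i, f (T i) = T i ^ m) := by
  set A := (p - m) / 2
  set q := (m + p) / 2
  set δ := min (m - ℓ) (P - p)
  set θ := δ / (p - m)
  have hA : 0 ≤ A := by positivity
  have hq_add : q + A = p := by ring
  have hq_sub : q - A = m := by ring
  have hθ : 0 < θ := div_pos (lt_min (by linarith) (by linarith)) (by linarith)
  have hspread : A * (1 + 2 * θ) = A + δ := by
    simp only [A, θ]
    field_simp [(sub_pos.2 h3).ne']
  have hmono := monotone_oscillating_sub_mul hA hθ.le (c := ℓ) (q := q)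
    (by linarith [min_le_left (m - ℓ) (P - p)])
  have hanti := antitone_oscillating_sub_mul hA hθ.le (c := P) (q := q)
    (by linarith [min_le_right (m - ℓ) (P - p)])
  obtain ⟨S, hS, hSval⟩ := exists_tendsto_expCompLog_oscillating_eq_rpow (q := q) (A := A) hθ
    (by positivity : 0 ≤ π / 2)
  obtain ⟨T, hT, hTval⟩ := exists_tendsto_expCompLog_oscillating_eq_rpow (q := q) (A := A) hθ
    (by positivity : 0 ≤ π / 2 + π)
  refine ⟨expCompLog (oscillating q A θ),
    continuousOn_expCompLog (continuous_oscillating q A θ) (by linarith) hmono,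
    expCompLog_zero _, fun s => expCompLog_pos, antitoneOn_expCompLog_div_rpow hanti,
    monotoneOn_expCompLog_div_rpow hmono, S, T, hS, hT, fun i => ?_, fun i => ?_⟩
  · rw [hSval, sin_pi_div_two, mul_one, hq_add]
  · rw [hTval, sin_add_pi, sin_pi_div_two, mul_neg_one, ← sub_eq_add_neg, hq_sub]
end

section
/- Let m, B, q be real numbers with 1 < m < B < q, set a = ((B−m)/(q−B))^{1/(q−m)}, and define f : [0,∞) → ℝ by f(s) = s^m + s^q for s ∈ [0,a] and f(s) = (1 + a^{q−m}) s^m for s ≥ a (this f is continuous), and f̃(s) = ∫₀^s f(z)/z dz. Then: (i) there exists p ∈ (1, B) such that s ↦ s^{−p} f̃(s) is nonincreasing on (0,∞); (ii) for every p ∈ (1, B), the function s ↦ s^{−p} f(s) is NOT nonincreasing on (0,∞). -/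
open Set Filter MeasureTheory

set_option maxHeartbeats 2000000 in
/-- for the piecewise nonlinearity of Remark 7(iii),
`s^{-p} f̃(s)` is nonincreasing for some `p ∈ (1,B)` while `s^{-p} f(s)` is not
nonincreasing for any `p ∈ (1,B)`. -/
theorem stmt_17 (m B q : ℝ) (h1 : 1 < m) (h2 : m < B) (h3 : B < q)
    (a : ℝ) (ha : a = ((B - m) / (q - B)) ^ (1 / (q - m)))
    (f : ℝ → ℝ)
    (hf : ∀ s : ℝ, f s = if s ≤ a then s ^ m + s ^ q else (1 + a ^ (q - m)) * s ^ m)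
    (ft : ℝ → ℝ) (hft : ∀ s : ℝ, ft s = ∫ z in Ioc (0 : ℝ) s, f z / z) :
    (∃ p ∈ Ioo (1 : ℝ) B, AntitoneOn (fun s : ℝ => ft s / s ^ p) (Ioi 0)) ∧
    (∀ p ∈ Ioo (1 : ℝ) B, ¬ AntitoneOn (fun s : ℝ => f s / s ^ p) (Ioi 0)) := by
  have hm0 : (0:ℝ) < m := by linarith
  have hq0 : (0:ℝ) < q := by linarith
  have hqm : (0:ℝ) < q - m := by linarith
  set A : ℝ := (B - m) / (q - B) with hA_def
  have hA : 0 < A := div_pos (by linarith) (by linarith)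
  have hABm : A * (q - B) = B - m := by
    rw [hA_def]; exact div_mul_cancel₀ _ (sub_pos.2 h3).ne'
  have hpow : ∀ X : ℝ, 0 < X → (X ^ (1/(q-m)) : ℝ) ^ (q-m) = X := by
    intro X hX
    rw [← Real.rpow_mul hX.le, one_div_mul_cancel hqm.ne', Real.rpow_one]
  have ha0 : 0 < a := by rw [ha]; exact Real.rpow_pos_of_pos hA _
  have haA : a ^ (q - m) = A := by rw [ha]; exact hpow A hA
  have haq : a ^ q = A * a ^ m := by
    have e : a ^ q = a ^ (q - m + m) := by norm_num
    rw [e, Real.rpow_add ha0, haA]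
  -- the value of f z / z on (0, a]
  have key1 : ∀ s : ℝ, s ≤ a → ∀ z ∈ Ioc (0:ℝ) s, f z / z = z ^ (m-1) + z ^ (q-1) := by
    intro s hsa z hz
    rw [hf, if_pos (hz.2.trans hsa), add_div, ← Real.rpow_sub_one hz.1.ne',
      ← Real.rpow_sub_one hz.1.ne']
  -- explicit formula for ft on (0, a]
  have hft_le : ∀ s : ℝ, 0 < s → s ≤ a → ft s = s ^ m / m + s ^ q / q := by
    intro s hs hsa
    have e1 : m - 1 + 1 = m := by ring
    have e2 : q - 1 + 1 = q := by ring
    calc ft s = ∫ z in Ioc (0:ℝ) s, (z ^ (m-1) + z ^ (q-1)) := by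
          rw [hft]; exact setIntegral_congr_fun measurableSet_Ioc (key1 s hsa)
      _ = ∫ z in (0:ℝ)..s, (z ^ (m-1) + z ^ (q-1)) :=
          (intervalIntegral.integral_of_le hs.le).symm
      _ = s ^ m / m + s ^ q / q := by
          rw [intervalIntegral.integral_add (intervalIntegral.intervalIntegrable_rpow' (by linarith))
            (intervalIntegral.intervalIntegrable_rpow' (by linarith)),
            integral_rpow (Or.inl (by linarith)), integral_rpow (Or.inl (by linarith)),
            e1, e2, Real.zero_rpow hm0.ne', Real.zero_rpow hq0.ne']
          ring
  -- integrability of f z / z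
  have hI1 : IntervalIntegrable (fun z : ℝ => f z / z) volume 0 a := by
    have base : IntervalIntegrable (fun z : ℝ => z ^ (m-1) + z ^ (q-1)) volume 0 a :=
      (intervalIntegral.intervalIntegrable_rpow' (by linarith)).add (intervalIntegral.intervalIntegrable_rpow' (by linarith))
    rw [intervalIntegrable_iff_integrableOn_Ioc_of_le ha0.le] at base ⊢
    exact base.congr_fun (fun z hz => (key1 a le_rfl z hz).symm) measurableSet_Ioc
  have hI2 : ∀ s : ℝ, a ≤ s → IntervalIntegrable (fun z : ℝ => f z / z) volume a s := by
    intro s hsa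
    have base : IntervalIntegrable (fun z : ℝ => (1+A) * z ^ (m-1)) volume a s :=
      (intervalIntegral.intervalIntegrable_rpow' (by linarith)).const_mul (1+A)
    rw [intervalIntegrable_iff_integrableOn_Ioc_of_le hsa] at base ⊢
    refine base.congr_fun (fun z hz => ?_) measurableSet_Ioc
    have hz0 : 0 < z := lt_trans ha0 hz.1
    rw [hf, if_neg (not_le.mpr hz.1), haA, mul_div_assoc, ← Real.rpow_sub_one hz0.ne']
  -- explicit formula for ft on [a, ∞)
  have hft_ge : ∀ s : ℝ, a ≤ s → ft s = (1+A) * s ^ m / m + (a ^ q / q - a ^ q / m) := by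
    intro s hsa
    have hs : 0 < s := lt_of_lt_of_le ha0 hsa
    have e1 : ∫ z in (0:ℝ)..a, f z / z = a ^ m / m + a ^ q / q := by
      rw [intervalIntegral.integral_of_le ha0.le, ← hft a, hft_le a ha0 le_rfl]
    have e2 : ∫ z in a..s, f z / z = (1+A) * ((s ^ m - a ^ m) / m) := by
      have hEq : EqOn (fun z : ℝ => f z / z) (fun z : ℝ => (1+A) * z ^ (m-1)) (Set.uIcc a s) := by
        intro z hz
        rw [uIcc_of_le hsa] at hz
        have hz0 : 0 < z := lt_of_lt_of_le ha0 hz.1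
        simp only
        rw [hf]
        split_ifs with hza
        · have hza' : z = a := le_antisymm hza hz.1
          rw [hza', haq, Real.rpow_sub_one ha0.ne']
          ring
        · rw [haA, mul_div_assoc, ← Real.rpow_sub_one hz0.ne']
      rw [intervalIntegral.integral_congr hEq, intervalIntegral.integral_const_mul,
        integral_rpow (Or.inl (by linarith))]
      have e : m - 1 + 1 = m := by ring
      rw [e]
    rw [hft, ← intervalIntegral.integral_of_le hs.le,
      ← intervalIntegral.integral_add_adjacent_intervals hI1 (hI2 s hsa), e1, e2, haq]
    ring
  -- derivative helper
  have hderiv : ∀ (c1 c2 r1 r2 : ℝ) (x : ℝ), x ≠ 0 →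
      HasDerivAt (fun s : ℝ => c1 * s ^ r1 + c2 * s ^ r2)
        (c1 * (r1 * x ^ (r1-1)) + c2 * (r2 * x ^ (r2-1))) x := by
    intro c1 c2 r1 r2 x hx
    exact ((Real.hasDerivAt_rpow_const (Or.inl hx)).const_mul c1).add
      ((Real.hasDerivAt_rpow_const (Or.inl hx)).const_mul c2)
  have hcont : ∀ (c1 c2 r1 r2 : ℝ) (D : Set ℝ), (∀ x ∈ D, x ≠ 0) →
      ContinuousOn (fun s : ℝ => c1 * s ^ r1 + c2 * s ^ r2) D := by
    intro c1 c2 r1 r2 D hD x hx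
    exact ((continuousAt_const.mul (Real.continuousAt_rpow_const x r1 (Or.inl (hD x hx)))).add
      (continuousAt_const.mul (Real.continuousAt_rpow_const x r2 (Or.inl (hD x hx))))).continuousWithinAt
  constructor
  · -- Part (i)
    have hden : 0 < q + m * A := by positivity
    set p : ℝ := m * q * (1 + A) / (q + m * A) with hp_def
    have hp_eq : p * (q + m * A) = m * q * (1 + A) := by
      rw [hp_def, div_mul_cancel₀ _ hden.ne']
    have hpm : m < p := by
      rw [hp_def, lt_div_iff₀ hden]
      nlinarith [mul_pos (mul_pos hm0 hA) hqm]
    have hpB : p < B := by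
      rw [hp_def, div_lt_iff₀ hden]
      nlinarith [mul_pos (sub_pos.2 h2) hqm, hABm]
    have hp1 : 1 < p := lt_trans h1 hpm
    have hq_p : 0 < q - p := by linarith
    have id1 : q * (p - m) = m * A * (q - p) := by linear_combination hp_eq
    have id2 : (1+A) * q * (p - m) = p * A * (q - m) := by linear_combination hp_eq
    set c0 : ℝ := a ^ q / q - a ^ q / m with hc0
    set G1 : ℝ → ℝ := fun s => (1/m) * s ^ (m-p) + (1/q) * s ^ (q-p) with hG1
    set G2 : ℝ → ℝ := fun s => ((1+A)/m) * s ^ (m-p) + c0 * s ^ (-p) with hG2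
    have hEq1 : ∀ s : ℝ, s ∈ Ioc (0:ℝ) a → ft s / s ^ p = G1 s := by
      intro s hs
      rw [hft_le s hs.1 hs.2, hG1]
      simp only
      rw [Real.rpow_sub hs.1, Real.rpow_sub hs.1]
      ring
    have hEq2 : ∀ s : ℝ, s ∈ Ici a → ft s / s ^ p = G2 s := by
      intro s hs
      have hs0 : 0 < s := lt_of_lt_of_le ha0 hs
      rw [hft_ge s hs, hG2]
      simp only
      rw [Real.rpow_sub hs0, Real.rpow_neg hs0.le]
      field_simp
    have hanti1 : AntitoneOn G1 (Ioc 0 a) := by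
      apply antitoneOn_of_deriv_nonpos (convex_Ioc _ _)
        (hcont _ _ _ _ _ (fun x hx => ne_of_gt hx.1))
      · intro x hx
        rw [interior_Ioc] at hx
        exact (hderiv _ _ _ _ x (ne_of_gt hx.1)).differentiableAt.differentiableWithinAt
      · intro x hx
        rw [interior_Ioc] at hx
        rw [(hderiv (1/m) (1/q) (m-p) (q-p) x (ne_of_gt hx.1)).deriv]
        have hx0 : 0 < x := hx.1
        have hxa : x ^ (q-m) ≤ A := by
          rw [← haA]; exact Real.rpow_le_rpow hx0.le hx.2.le hqm.le
        have hsplit : x ^ (q-p-1) = x ^ (m-p-1) * x ^ (q-m) := by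
          rw [← Real.rpow_add hx0]; congr 1; ring
        rw [hsplit]
        have hxp : 0 < x ^ (m-p-1) := Real.rpow_pos_of_pos hx0 _
        have h5 : m * ((q-p) * x ^ (q-m)) ≤ m * ((q-p) * A) :=
          mul_le_mul_of_nonneg_left (mul_le_mul_of_nonneg_left hxa hq_p.le) hm0.le
        have keyb : (m-p) * q + (q-p) * x ^ (q-m) * m ≤ 0 := by nlinarith [h5, id1]
        have key2 : x ^ (m-p-1) * ((m-p) * q + (q-p) * x ^ (q-m) * m) ≤ 0 :=
          mul_nonpos_of_nonneg_of_nonpos hxp.le keyb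
        have erw : (1/m) * ((m-p) * x ^ (m-p-1)) + (1/q) * ((q-p) * (x ^ (m-p-1) * x ^ (q-m)))
            = (x ^ (m-p-1) * ((m-p) * q + (q-p) * x ^ (q-m) * m)) / (m * q) := by
          field_simp
        rw [erw]
        exact div_nonpos_of_nonpos_of_nonneg key2 (by positivity)
    have hanti2 : AntitoneOn G2 (Ici a) := by
      apply antitoneOn_of_deriv_nonpos (convex_Ici _)
        (hcont _ _ _ _ _ (fun x hx => ne_of_gt (lt_of_lt_of_le ha0 hx)))
      · intro x hx
        rw [interior_Ici] at hx
        exact (hderiv _ _ _ _ x (ne_of_gt (lt_trans ha0 hx))).differentiableAt.differentiableWithinAt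
      · intro x hx
        rw [interior_Ici] at hx
        have hx0 : 0 < x := lt_trans ha0 hx
        rw [(hderiv ((1+A)/m) c0 (m-p) (-p) x hx0.ne').deriv]
        have hxm : a ^ m ≤ x ^ m := Real.rpow_le_rpow ha0.le (le_of_lt hx) hm0.le
        have hXm : 0 < a ^ m := Real.rpow_pos_of_pos ha0 _
        have hsplit : x ^ (m-p-1) = x ^ m * x ^ (-p-1) := by
          rw [← Real.rpow_add hx0]; congr 1; ring
        have hsplit2 : x ^ (-p-1) = x ^ (-p-1) := rfl
        have hX' : 0 < x ^ (-p-1) := Real.rpow_pos_of_pos hx0 _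
        have hmqc0 : c0 * (m*q) = A * a ^ m * (m - q) := by
          rw [hc0, haq]; field_simp
        have hcoef : (0:ℝ) ≤ q * (1+A) * (p-m) :=
          le_of_lt (mul_pos (mul_pos hq0 (by linarith)) (sub_pos.2 hpm))
        have hint : q * (1+A) * (p-m) * a ^ m ≤ q * (1+A) * (p-m) * x ^ m :=
          mul_le_mul_of_nonneg_left hxm hcoef
        have id2a : (1+A) * q * (p - m) * a ^ m = p * A * (q - m) * a ^ m := by rw [id2]
        have keyb : (1+A) * (m-p) * x ^ m * q + c0 * (-p) * (m*q) ≤ 0 := by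
          nlinarith [hint, id2a, hmqc0]
        have key2 : x ^ (-p-1) * ((1+A) * (m-p) * x ^ m * q + c0 * (-p) * (m*q)) ≤ 0 :=
          mul_nonpos_of_nonneg_of_nonpos hX'.le keyb
        have erw : ((1+A)/m) * ((m-p) * x ^ (m-p-1)) + c0 * ((-p) * x ^ (-p-1))
            = (x ^ (-p-1) * ((1+A) * (m-p) * x ^ m * q + c0 * (-p) * (m*q))) / (m * q) := by
          rw [hsplit]
          field_simp
        rw [erw]
        exact div_nonpos_of_nonpos_of_nonneg key2 (by positivity)
    refine ⟨p, ⟨hp1, hpB⟩, ?_⟩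
    intro x hx y hy hxy
    simp only [mem_Ioi] at hx hy
    show ft y / y ^ p ≤ ft x / x ^ p
    rcases le_total y a with hya | hay
    · rw [hEq1 x ⟨hx, le_trans hxy hya⟩, hEq1 y ⟨hy, hya⟩]
      exact hanti1 ⟨hx, le_trans hxy hya⟩ ⟨hy, hya⟩ hxy
    · rcases le_total x a with hxa | hax
      · rw [hEq1 x ⟨hx, hxa⟩, hEq2 y hay]
        calc G2 y ≤ G2 a := hanti2 self_mem_Ici hay hay
          _ = ft a / a ^ p := (hEq2 a self_mem_Ici).symm
          _ = G1 a := hEq1 a ⟨ha0, le_rfl⟩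
          _ ≤ G1 x := hanti1 ⟨hx, hxa⟩ ⟨ha0, le_rfl⟩ hxa
      · rw [hEq2 x hax, hEq2 y hay]
        exact hanti2 hax hay hxy
  · -- Part (ii)
    rintro p ⟨hp1, hpB⟩ H
    have hq_p : 0 < q - p := by linarith
    set T : ℝ := max ((p - m)/(q - p)) 0 with hT
    have hTA : T < A := by
      apply max_lt _ hA
      rw [div_lt_iff₀ hq_p]
      nlinarith [hABm, mul_pos (sub_pos.2 hpB) hqm]
    have hT0 : 0 ≤ T := le_max_right _ _
    set S : ℝ := (T + A)/2 with hS
    have hS0 : 0 < S := by rw [hS]; linarith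
    have hSA : S < A := by rw [hS]; linarith
    have hST : T < S := by rw [hS]; linarith
    set s0 : ℝ := S ^ (1/(q-m)) with hs0def
    have hs00 : 0 < s0 := Real.rpow_pos_of_pos hS0 _
    have hs0qm : s0 ^ (q-m) = S := hpow S hS0
    have hs0a : s0 < a := by
      rw [hs0def, ha]
      exact Real.rpow_lt_rpow hS0.le hSA (by positivity)
    set G : ℝ → ℝ := fun s => 1 * s ^ (m-p) + 1 * s ^ (q-p) with hG
    have hGmono : StrictMonoOn G (Icc s0 a) := by
      apply strictMonoOn_of_deriv_pos (convex_Icc _ _)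
        (hcont _ _ _ _ _ (fun x hx => ne_of_gt (lt_of_lt_of_le hs00 hx.1)))
      intro x hx
      rw [interior_Icc] at hx
      have hx0 : 0 < x := lt_trans hs00 hx.1
      rw [(hderiv 1 1 (m-p) (q-p) x hx0.ne').deriv]
      have hxS : S < x ^ (q-m) := by
        rw [← hs0qm]; exact Real.rpow_lt_rpow hs00.le hx.1 hqm
      have hxp : 0 < x ^ (m-p-1) := Real.rpow_pos_of_pos hx0 _
      have hsplit : x ^ (q-p-1) = x ^ (m-p-1) * x ^ (q-m) := by
        rw [← Real.rpow_add hx0]; congr 1; ring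
      rw [hsplit]
      have h5 : (p-m)/(q-p) ≤ T := le_max_left _ _
      have h6 : p - m ≤ T * (q-p) := by
        rw [div_le_iff₀ hq_p] at h5; linarith
      have hbr : 0 < (m-p) + (q-p) * x ^ (q-m) := by
        nlinarith [mul_lt_mul_of_pos_left hxS hq_p, mul_le_mul_of_nonneg_right hST.le hq_p.le]
      nlinarith [mul_pos hxp hbr]
    have hG0 : G s0 < G a :=
      hGmono (left_mem_Icc.2 hs0a.le) (right_mem_Icc.2 hs0a.le) hs0a
    have hEqf : ∀ s : ℝ, 0 < s → s ≤ a → f s / s ^ p = G s := by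
      intro s hs hsa
      rw [hf, if_pos hsa, hG]
      simp only
      rw [Real.rpow_sub hs, Real.rpow_sub hs]
      ring
    have hHa := H (mem_Ioi.2 hs00) (mem_Ioi.2 ha0) hs0a.le
    simp only at hHa
    rw [hEqf s0 hs00 hs0a.le, hEqf a ha0 le_rfl] at hHa
    exact absurd hHa (not_le.2 hG0)
end

section
/- Let f : (0,∞) → ℝ be continuous with f(s) > 0 for all s > 0. Assume there exist constants C ≥ 1 and Q > 1 with f(t) ≤ C (t/s)^Q f(s) for all 1 ≤ s ≤ t, and constants c₀ > 0 and m > 1 with f(s) ≥ c₀ s^m for all s ≥ 1. Then there exists a constant c > 0, depending only on C, Q, c₀ and m, with the following property: for every T ∈ ℝ, every t₀ < T, and every differentiable function y : (t₀, T) → (0,∞) satisfying y'(t) = f(y(t)) for all t ∈ (t₀,T) and y(t) → ∞ as t → T⁻, there exists t₁ ∈ (t₀, T) such that f(y(t))/y(t) ≥ c/(T − t) for all t ∈ (t₁, T). -/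
open Set Filter

/-- Mean value helper: if `g` has derivative `g'` on `Icc a b` with `g'` nonneg on
`Ioo a b`, then `g a ≤ g b`. -/
lemma stmt_18_mono {g g' : ℝ → ℝ} {a b : ℝ} (hab : a ≤ b)
    (hd : ∀ r ∈ Icc a b, HasDerivAt g (g' r) r)
    (h0 : ∀ r ∈ Ioo a b, 0 ≤ g' r) : g a ≤ g b := by
  have hmono : MonotoneOn g (Icc a b) := by
    apply monotoneOn_of_deriv_nonneg (convex_Icc a b)
    · exact fun r hr => (hd r hr).continuousAt.continuousWithinAt
    · intro r hr
      rw [interior_Icc] at hr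
      exact ((hd r (Ioo_subset_Icc_self hr)).differentiableAt).differentiableWithinAt
    · intro r hr
      rw [interior_Icc] at hr
      rw [(hd r (Ioo_subset_Icc_self hr)).deriv]
      exact h0 r hr
  exact hmono (left_mem_Icc.2 hab) (right_mem_Icc.2 hab) hab

/-- lower blow-up rate for solutions of the ODE `y' = f(y)`
blowing up at time `T`, under controled variation of `f` at infinity. -/
theorem stmt_18 (C Q c₀ m : ℝ) (hC : 1 ≤ C) (hQ : 1 < Q) (hc₀ : 0 < c₀) (hm : 1 < m) :
    ∃ c : ℝ, 0 < c ∧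
      ∀ f : ℝ → ℝ,
        ContinuousOn f (Ioi 0) →
        (∀ s : ℝ, 0 < s → 0 < f s) →
        (∀ s t : ℝ, 1 ≤ s → s ≤ t → f t ≤ C * (t / s) ^ Q * f s) →
        (∀ s : ℝ, 1 ≤ s → c₀ * s ^ m ≤ f s) →
        ∀ T t₀ : ℝ, t₀ < T →
          ∀ y : ℝ → ℝ,
            (∀ t ∈ Ioo t₀ T, 0 < y t) →
            (∀ t ∈ Ioo t₀ T, HasDerivAt y (f (y t)) t) →
            Tendsto y (nhdsWithin T (Iio T)) atTop →
            ∃ t₁ ∈ Ioo t₀ T, ∀ t ∈ Ioo t₁ T,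
              c / (T - t) ≤ f (y t) / y t := by
  have hC0 : (0:ℝ) < C := lt_of_lt_of_le one_pos hC
  refine ⟨(2 * C * (Q - 1))⁻¹, inv_pos.2 (by nlinarith), ?_⟩
  intro f hfc hfpos hCV hlow T t₀ ht₀T y hy0 hyd hyT
  -- step 1: find `a < T` such that `y ≥ 1` on `Ioo a T`
  have h1 : ∀ᶠ r in nhdsWithin T (Iio T), 1 ≤ y r := hyT.eventually (eventually_ge_atTop 1)
  obtain ⟨a, haT, ha⟩ := mem_nhdsLT_iff_exists_Ioo_subset.1 h1
  set t₁ : ℝ := max a ((t₀ + T) / 2) with ht₁def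
  have ht₁ : t₁ ∈ Ioo t₀ T := by
    constructor
    · exact lt_of_lt_of_le (by linarith) (le_max_right _ _)
    · exact max_lt haT (by linarith)
  refine ⟨t₁, ht₁, ?_⟩
  intro t ht
  have ht0T : t ∈ Ioo t₀ T := ⟨lt_trans ht₁.1 ht.1, ht.2⟩
  have hs1 : 1 ≤ y t := ha ⟨lt_of_le_of_lt (le_max_left _ _) ht.1, ht.2⟩
  set s : ℝ := y t with hsdef
  have hs0 : (0:ℝ) < s := lt_of_lt_of_le one_pos hs1
  have hfs : 0 < f s := hfpos s hs0
  have hsQ : (0:ℝ) < s ^ Q := Real.rpow_pos_of_pos hs0 Q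
  -- the constant K with K ^ (1 - Q) = 1/2
  set K : ℝ := (2:ℝ) ^ (Q - 1)⁻¹ with hKdef
  have hQ1 : Q - 1 ≠ 0 := sub_ne_zero.2 (ne_of_gt hQ)
  have hK1 : (1:ℝ) ≤ K := Real.one_le_rpow one_le_two (inv_nonneg.2 (by linarith))
  have hKQ : K ^ (1 - Q) = 1 / 2 := by
    rw [hKdef, ← Real.rpow_mul (by norm_num)]
    have he : (Q - 1)⁻¹ * (1 - Q) = -1 := by
      field_simp
      ring
    rw [he, Real.rpow_neg_one]
    norm_num
  -- step 2: pick τ ∈ Ioo t T with y τ ≥ K * s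
  have h2 : ∀ᶠ r in nhdsWithin T (Iio T), K * s ≤ y r :=
    hyT.eventually (eventually_ge_atTop (K * s))
  have h3 : Ioo t T ∈ nhdsWithin T (Iio T) :=
    Ioo_mem_nhdsLT_of_mem ⟨ht.2, le_refl T⟩
  obtain ⟨τ, hτK, hτIoo⟩ := (h2.and (eventually_of_mem h3 (fun r hr => hr))).exists
  have htτ : t ≤ τ := le_of_lt hτIoo.1
  have hsub : Icc t τ ⊆ Ioo t₀ T :=
    fun r hr => ⟨lt_of_lt_of_le ht0T.1 hr.1, lt_of_le_of_lt hr.2 hτIoo.2⟩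
  -- y is monotone on [t, τ] : y r ≥ s
  have hymono : ∀ r ∈ Icc t τ, s ≤ y r := by
    intro r hr
    have : Icc t r ⊆ Icc t τ := Icc_subset_Icc le_rfl hr.2
    exact stmt_18_mono hr.1
      (fun u hu => hyd u (hsub (this hu)))
      (fun u hu => le_of_lt (hfpos _ (hy0 u (hsub (this (Ioo_subset_Icc_self hu))))))
  have hy1 : ∀ r ∈ Icc t τ, 1 ≤ y r := fun r hr => le_trans hs1 (hymono r hr)
  have hypos : ∀ r ∈ Icc t τ, 0 < y r := fun r hr => lt_of_lt_of_le one_pos (hy1 r hr)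
  -- set B
  set B : ℝ := (Q - 1) * C * f s / s ^ Q with hBdef
  have hB0 : 0 < B := by
    apply div_pos _ hsQ
    have h9 : 0 < Q - 1 := by linarith
    positivity
  -- w r = (y r)^(1-Q) + B * r is monotone on [t, τ]
  have hw : (y t) ^ (1 - Q) + B * t ≤ (y τ) ^ (1 - Q) + B * τ := by
    apply stmt_18_mono (g' := fun r => (1 - Q) * (y r) ^ (1 - Q - 1) * f (y r) + B) htτ
    · intro r hr
      have hD := ((hyd r (hsub hr)).rpow_const
        (p := 1 - Q) (Or.inl (ne_of_gt (hypos r hr)))).add ((hasDerivAt_id r).const_mul B)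
      convert hD using 1
      · rfl
      · rfl
      · rfl
      ring
    · intro r hr
      have hr' := Ioo_subset_Icc_self hr
      have hyr : 0 < y r := hypos r hr'
      have hsy : s ≤ y r := hymono r hr'
      have hfb : f (y r) ≤ C * (y r / s) ^ Q * f s := hCV s (y r) hs1 hsy
      have hdiv : (y r / s) ^ Q = (y r) ^ Q / s ^ Q :=
        Real.div_rpow (le_of_lt hyr) (le_of_lt hs0) Q
      have hyrQ : (0:ℝ) < (y r) ^ Q := Real.rpow_pos_of_pos hyr Q
      have hneg : (y r) ^ (1 - Q - 1) = ((y r) ^ Q)⁻¹ := by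
        rw [show (1 - Q - 1 : ℝ) = -Q by ring, Real.rpow_neg (le_of_lt hyr)]
      rw [hneg]
      have hfb2 : f (y r) ≤ C * ((y r) ^ Q / s ^ Q) * f s := by
        rw [← hdiv]; exact hfb
      have key : ((y r) ^ Q)⁻¹ * f (y r) ≤ C * f s / s ^ Q := by
        calc ((y r) ^ Q)⁻¹ * f (y r)
            ≤ ((y r) ^ Q)⁻¹ * (C * ((y r) ^ Q / s ^ Q) * f s) :=
              mul_le_mul_of_nonneg_left hfb2 (le_of_lt (inv_pos.2 hyrQ))
          _ = C * f s / s ^ Q := by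
              field_simp
      have h1Q : (1:ℝ) - Q < 0 := by linarith
      have h8 := mul_le_mul_of_nonpos_left key (le_of_lt h1Q)
      have hBexp : B = -((1 - Q) * (C * f s / s ^ Q)) := by
        rw [hBdef]; ring
      rw [hBexp]
      nlinarith [h8]
  -- conclude
  have hyτ : (y τ) ^ (1 - Q) ≤ (1 / 2) * s ^ (1 - Q) := by
    have hKs : (0:ℝ) < K * s := by positivity
    have h4 : (y τ) ^ (1 - Q) ≤ (K * s) ^ (1 - Q) :=
      Real.rpow_le_rpow_of_nonpos hKs hτK (by linarith)
    have h5 : (K * s) ^ (1 - Q) = K ^ (1 - Q) * s ^ (1 - Q) :=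
      Real.mul_rpow (by positivity) (le_of_lt hs0)
    rw [h5, hKQ] at h4
    exact h4
  have hsQ' : s ^ (1 - Q) * s ^ Q = s := by
    rw [← Real.rpow_add hs0]
    norm_num
  have hTt : 0 < T - t := by linarith [ht.2]
  have hτT : τ - t ≤ T - t := by linarith [hτIoo.2]
  -- s^(1-Q)/2 ≤ B * (T - t)
  have hmain : s ^ (1 - Q) / 2 ≤ B * (T - t) := by
    have h6 : s ^ (1 - Q) / 2 ≤ B * (τ - t) := by
      have : s ^ (1 - Q) + B * t ≤ (1 / 2) * s ^ (1 - Q) + B * τ := by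
        calc s ^ (1 - Q) + B * t ≤ (y τ) ^ (1 - Q) + B * τ := hw
          _ ≤ (1 / 2) * s ^ (1 - Q) + B * τ := by linarith
      linarith
    calc s ^ (1 - Q) / 2 ≤ B * (τ - t) := h6
      _ ≤ B * (T - t) := by nlinarith
  -- multiply by s^Q and rearrange
  have hmain2 : s ≤ 2 * (Q - 1) * C * f s * (T - t) := by
    have h10 := mul_le_mul_of_nonneg_right hmain (le_of_lt hsQ)
    have hBs : B * s ^ Q = (Q - 1) * C * f s := by
      rw [hBdef]; field_simp
    have h11 : s / 2 ≤ (Q - 1) * C * f s * (T - t) := by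
      calc s / 2 = s ^ (1 - Q) * s ^ Q / 2 := by rw [hsQ']
        _ = s ^ (1 - Q) / 2 * s ^ Q := by ring
        _ ≤ B * (T - t) * s ^ Q := h10
        _ = B * s ^ Q * (T - t) := by ring
        _ = (Q - 1) * C * f s * (T - t) := by rw [hBs]
    linarith
  have h2CQ : (0:ℝ) < 2 * C * (Q - 1) := by nlinarith
  rw [div_le_div_iff₀ hTt hs0, inv_mul_eq_div, div_le_iff₀ h2CQ]
  linarith [hmain2]
end

section
/- Let (E, dist) be a complete metric space, let Σ ⊆ E be a closed nonempty set, let D ⊆ Σ be nonempty, and set Γ = Σ \ D, assumed nonempty. Let M : D → (0,∞) be bounded on compact subsets of D, and fix k > 0. If y ∈ D satisfies M(y) · dist(y, Γ) > 2k, then there exists x ∈ D such that M(x) · dist(x, Γ) > 2k, M(x) ≥ M(y), and M(z) ≤ 2 M(x) for every z ∈ D belonging to the closed ball in E of center x and radius k / M(x). -/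
/-!
Suppose no such `x` exists. Starting from `y`, each point `x` with `M x * dist(x, Γ) > 2k` then
has a point of `D` in `closedBall x (k / M x)` where `M` more than doubles, and the inequality
`M * dist(·, Γ) > 2k` passes to that point. This produces a sequence along which `M` grows at
least like `2ⁿ` while the steps shrink like `2⁻ⁿ`. So the sequence is Cauchy, and its limit lies
within `2k / M y < dist(y, Γ)` of `y`. Since `Σ` is closed, the limit is in `D`. The limit together
with the sequence is then a compact subset of `D` on which `M` is unbounded, a contradiction.
-/

open Set Metric Filter Topology

theorem exists_seq_of_forall_exists {α : Type*} {P : α → Prop} {R : α → α → Prop}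
    (h : ∀ x, P x → ∃ z, P z ∧ R x z) {x₀ : α} (hx₀ : P x₀) :
    ∃ u : ℕ → α, u 0 = x₀ ∧ ∀ n, P (u n) ∧ R (u n) (u (n + 1)) := by
  choose! g hgP hgR using h
  have hP : ∀ n, P (g^[n] x₀) := by
    intro n
    induction n with
    | zero => exact hx₀
    | succ n ih => rw [Function.iterate_succ_apply']; exact hgP _ ih
  refine ⟨fun n => g^[n] x₀, rfl, fun n => ⟨hP n, ?_⟩⟩
  simpa only [Function.iterate_succ_apply'] using hgR _ (hP n)

theorem two_pow_mul_le_of_two_mul_le {a : ℕ → ℝ} (h : ∀ n, 2 * a n ≤ a (n + 1)) (n : ℕ) :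
    2 ^ n * a 0 ≤ a n := by
  induction n with
  | zero => simp
  | succ n ih =>
    calc 2 ^ (n + 1) * a 0 = 2 * (2 ^ n * a 0) := by ring
      _ ≤ 2 * a n := by gcongr
      _ ≤ a (n + 1) := h n

section

variable {E : Type*} [MetricSpace E]

theorem two_mul_lt_mul_infDist_of_mem_closedBall {s : Set E} {x z : E} {a b k : ℝ} (ha : 0 < a)
    (hx : 2 * k < a * infDist x s) (hz : z ∈ closedBall x (k / a)) (hab : 2 * a ≤ b) :
    2 * k < b * infDist z s := by
  have hxs : 2 * k / a < infDist x s := by rw [div_lt_iff₀ ha]; linarith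
  have hzs : k / a < infDist z s := by
    have := infDist_le_infDist_add_dist (x := x) (y := z) (s := s)
    rw [mem_closedBall'] at hz
    linarith [show 2 * k / a = k / a + k / a by ring]
  calc 2 * k = 2 * a * (k / a) := by field_simp
    _ < 2 * a * infDist z s := by gcongr
    _ ≤ b * infDist z s := by gcongr; exact infDist_nonneg

theorem exists_bound_of_tendsto_of_mem {D : Set E} {M : E → ℝ}
    (hM_bdd : ∀ K : Set E, K ⊆ D → IsCompact K → ∃ B : ℝ, ∀ x ∈ K, M x ≤ B)
    {u : ℕ → E} {l : E} (hu : ∀ n, u n ∈ D) (hl : l ∈ D) (hul : Tendsto u atTop (𝓝 l)) :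
    ∃ B : ℝ, ∀ n, M (u n) ≤ B := by
  have hKD : insert l (range u) ⊆ D := by
    rintro x (rfl | ⟨n, rfl⟩)
    exacts [hl, hu n]
  obtain ⟨B, hB⟩ := hM_bdd _ hKD hul.isCompact_insert_range
  exact ⟨B, fun n => hB _ (mem_insert_of_mem _ (mem_range_self n))⟩

theorem not_exists_doubling_seq [CompleteSpace E] {Sig D : Set E} (hSig : IsClosed Sig)
    (hDSig : D ⊆ Sig) {M : E → ℝ}
    (hM_bdd : ∀ K : Set E, K ⊆ D → IsCompact K → ∃ B : ℝ, ∀ x ∈ K, M x ≤ B)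
    {k : ℝ} (hk : 0 ≤ k) {u : ℕ → E} (hu : ∀ n, u n ∈ D) (hM₀ : 0 < M (u 0))
    (h₀ : 2 * k < M (u 0) * infDist (u 0) (Sig \ D))
    (hstep : ∀ n, u (n + 1) ∈ closedBall (u n) (k / M (u n)))
    (hdouble : ∀ n, 2 * M (u n) ≤ M (u (n + 1))) : False := by
  have hgrow := two_pow_mul_le_of_two_mul_le hdouble
  have hdist : ∀ n, dist (u n) (u (n + 1)) ≤ 2 * k / M (u 0) / 2 / 2 ^ n := fun n =>
    calc dist (u n) (u (n + 1)) ≤ k / M (u n) := mem_closedBall'.1 (hstep n)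
      _ ≤ k / (2 ^ n * M (u 0)) := by gcongr; exact hgrow n
      _ = 2 * k / M (u 0) / 2 / 2 ^ n := by field_simp
  obtain ⟨l, hul⟩ := cauchySeq_tendsto_of_complete (cauchySeq_of_le_geometric_two hdist)
  have hlΓ : l ∉ Sig \ D := fun hl => by
    have h₁ := dist_le_of_le_geometric_two_of_tendsto₀ hdist hul
    have h₂ := infDist_le_dist_of_mem (x := u 0) hl
    rw [le_div_iff₀ hM₀] at h₁
    linarith [mul_le_mul_of_nonneg_left h₂ hM₀.le]
  have hlD : l ∈ D := by
    by_contra hlD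
    exact hlΓ ⟨hSig.mem_of_tendsto hul (Eventually.of_forall fun n => hDSig (hu n)), hlD⟩
  obtain ⟨B, hB⟩ := exists_bound_of_tendsto_of_mem hM_bdd hu hlD hul
  obtain ⟨n, hn⟩ := pow_unbounded_of_one_lt (B / M (u 0)) (one_lt_two (α := ℝ))
  rw [div_lt_iff₀ hM₀] at hn
  linarith [hgrow n, hB n]

end

theorem stmt_19_general {E : Type*} [MetricSpace E] [CompleteSpace E]
    (Sig D : Set E) (hSig_closed : IsClosed Sig)
    (hDSig : D ⊆ Sig)
    (M : E → ℝ) (hM_pos : ∀ x ∈ D, 0 < M x)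
    (hM_bdd : ∀ K : Set E, K ⊆ D → IsCompact K → ∃ B : ℝ, ∀ x ∈ K, M x ≤ B)
    (k : ℝ) (hk : 0 < k)
    (y : E) (hy : y ∈ D) (hyD : M y * infDist y (Sig \ D) > 2 * k) :
    ∃ x ∈ D,
      M x * infDist x (Sig \ D) > 2 * k ∧
      M y ≤ M x ∧
      ∀ z ∈ D ∩ closedBall x (k / M x), M z ≤ 2 * M x := by
  by_contra! hcon
  obtain ⟨u, hu₀, hu⟩ := exists_seq_of_forall_exists
    (P := fun x => x ∈ D ∧ 2 * k < M x * infDist x (Sig \ D) ∧ M y ≤ M x)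
    (R := fun x z => z ∈ closedBall x (k / M x) ∧ 2 * M x < M z)
    (fun x ⟨hxD, hx, hyx⟩ => by
      obtain ⟨z, ⟨hzD, hzx⟩, hMz⟩ := hcon x hxD hx hyx
      have hMx := hM_pos x hxD
      exact ⟨z, ⟨hzD, two_mul_lt_mul_infDist_of_mem_closedBall hMx hx hzx hMz.le,
        by linarith⟩, hzx, hMz⟩)
    ⟨hy, hyD, le_rfl⟩
  subst hu₀
  exact not_exists_doubling_seq hSig_closed hDSig hM_bdd hk.le (fun n => (hu n).1.1)
    (hM_pos _ hy) hyD (fun n => (hu n).2.1) (fun n => (hu n).2.2.le)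

/-- the doubling lemma of Poláčik–Quittner–Souplet. -/
theorem stmt_19 {E : Type*} [MetricSpace E] [CompleteSpace E]
    (Sig D : Set E) (hSig_closed : IsClosed Sig) (hSig_ne : Sig.Nonempty)
    (hD_ne : D.Nonempty) (hDSig : D ⊆ Sig) (hΓ_ne : (Sig \ D).Nonempty)
    (M : E → ℝ) (hM_pos : ∀ x ∈ D, 0 < M x)
    (hM_bdd : ∀ K : Set E, K ⊆ D → IsCompact K → ∃ B : ℝ, ∀ x ∈ K, M x ≤ B)
    (k : ℝ) (hk : 0 < k)
    (y : E) (hy : y ∈ D) (hyD : M y * infDist y (Sig \ D) > 2 * k) :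
    ∃ x ∈ D,
      M x * infDist x (Sig \ D) > 2 * k ∧
      M y ≤ M x ∧
      ∀ z ∈ D ∩ closedBall x (k / M x), M z ≤ 2 * M x :=
  stmt_19_general Sig D hSig_closed hDSig M hM_pos hM_bdd k hk y hy hyD
end
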